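/- arXiv:2311.03225 — 9 statements merged into one kernel-verified Lean document; each statement's English description precedes it below -/
import Mathlib

section
/- Let φ be a 3-CNF formula with variables x_1,…,x_N and clauses C_1,…,C_M, each clause containing at most three literals. Set α = N + 3M and U = {1,…,2N+3M}, and for each i ∈ {1,…,N} define T_i = {α−i+1, α+i} ∪ {3j : x_i ∈ C_j} ∪ {3j−1 : ¬x_i ∈ C_j} and F_i = {α−i+1, α+i} ∪ {3j : ¬x_i ∈ C_j} ∪ {3j−1 : x_i ∈ C_j}. If the Inclusive Set Cover instance with ground set U, family (T_1,…,T_N, F_1,…,F_N) and budget k = N is a yes-instance, then φ is satisfiable. -/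
/-- Inclusive Set Cover: ground set `{1,…,n}`, family `S` indexed by `ι`, budget `k`.
The instance is a yes-instance if some subfamily `R` with `|R| ≤ k` admits a surjection `f`
from the disjoint union `⊔_{i∈R} S_i` onto `{1,…,n}` with `f (v,i) ≤ v` everywhere. -/
def InclusiveSetCoverYes {ι : Type*} (n : ℕ) (S : ι → Finset ℕ) (k : ℕ) : Prop :=
  ∃ (R : Finset ι) (f : {p : ℕ × ι // p.2 ∈ R ∧ p.1 ∈ S p.2} → {u : ℕ // u ∈ Finset.Icc 1 n}),
    R.card ≤ k ∧ Function.Surjective f ∧ ∀ p, (f p : ℕ) ≤ p.1.1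

/-- The set `T_i = {α−i+1, α+i} ∪ {3j : x_i ∈ C_j} ∪ {3j−1 : ¬x_i ∈ C_j}` where `α = N+3M`;
here `i : Fin N` stands for the 1-based variable index `i+1`, and `j : Fin M` for the 1-based
clause index `j+1` (so `3j` becomes `3*j.val+3` and `3j−1` becomes `3*j.val+2`). -/
def Tset {N M : ℕ} (C : Fin M → Finset (Bool × Fin N)) (i : Fin N) : Finset ℕ :=
  {N + 3*M - i.val, N + 3*M + i.val + 1} ∪
  ((Finset.univ.filter fun j : Fin M => (true, i) ∈ C j).image fun j => 3*j.val + 3) ∪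
  ((Finset.univ.filter fun j : Fin M => (false, i) ∈ C j).image fun j => 3*j.val + 2)

/-- The set `F_i = {α−i+1, α+i} ∪ {3j : ¬x_i ∈ C_j} ∪ {3j−1 : x_i ∈ C_j}` where `α = N+3M`. -/
def Fset {N M : ℕ} (C : Fin M → Finset (Bool × Fin N)) (i : Fin N) : Finset ℕ :=
  {N + 3*M - i.val, N + 3*M + i.val + 1} ∪
  ((Finset.univ.filter fun j : Fin M => (false, i) ∈ C j).image fun j => 3*j.val + 3) ∪
  ((Finset.univ.filter fun j : Fin M => (true, i) ∈ C j).image fun j => 3*j.val + 2)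

/-!
If `f` witnesses a yes-instance, it only moves elements downwards, so for every threshold `t`
the ground elements `≥ t` have distinct preimages `≥ t`: `#{u ∈ U : t ≤ u}` is at most the
number of elements `≥ t` in the chosen sets. Above `3M` each `T_i` or `F_i` only has its two
variable elements `α − i + 1` and `α + i`, and the thresholds `α − i + 2` and `α + i + 1` force
`R` to choose at most one of `T_i`, `F_i` for every `i`. Then every occurrence of a variable
contributes at most one chosen element to the clause part, so the chosen sets have at most
`3 (M − j)` elements in `(3j, 3M]`, and the threshold `3j` forces `3j` itself into a chosen set:
`T_i` with `x_i ∈ C_j` or `F_i` with `¬x_i ∈ C_j`. Setting `x_i` true iff `T_i` is chosen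
therefore satisfies every clause.
-/
open Finset

theorem card_Icc_le_sum_card_filter_le {ι : Type*} {n : ℕ} {S : ι → Finset ℕ} {R : Finset ι}
    (f : {p : ℕ × ι // p.2 ∈ R ∧ p.1 ∈ S p.2} → {u : ℕ // u ∈ Icc 1 n})
    (hf : Function.Surjective f) (hle : ∀ p, (f p : ℕ) ≤ p.1.1) {t : ℕ} (ht : 1 ≤ t) :
    #(Icc t n) ≤ ∑ s ∈ R, #((S s).filter (t ≤ ·)) := by
  set P := R.sigma fun s => (S s).filter (t ≤ ·)
  have hP : ∀ x ∈ P, x.1 ∈ R ∧ x.2 ∈ S x.1 := fun x hx => by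
    simp only [P, mem_sigma, mem_filter] at hx
    exact ⟨hx.1, hx.2.1⟩
  have hsub : Icc t n ⊆ P.attach.image fun x => (f ⟨(x.1.2, x.1.1), hP x.1 x.2⟩ : ℕ) := by
    intro u hu
    have hu' : u ∈ Icc 1 n := by simp only [mem_Icc] at hu ⊢; omega
    obtain ⟨⟨⟨v, s⟩, hs, hv⟩, hp⟩ := hf ⟨u, hu'⟩
    have htv : t ≤ v := (mem_Icc.mp hu).1.trans (by simpa [hp] using hle ⟨(v, s), hs, hv⟩)
    exact mem_image.mpr ⟨⟨⟨s, v⟩, by simp [P, hs, hv, htv]⟩, mem_attach _ _, by simp [hp]⟩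
  calc #(Icc t n) ≤ #P.attach := (card_le_card hsub).trans card_image_le
    _ = ∑ s ∈ R, #((S s).filter (t ≤ ·)) := by rw [card_attach, card_sigma]

namespace InclusiveSetCover

def varOf {α : Type*} : α ⊕ α → α := Sum.elim id id

variable {N M : ℕ} (C : Fin M → Finset (Bool × Fin N))

/-- `s.isLeft` is the value that choosing `s` (`T_i` or `F_i`) assigns to its variable. -/
theorem mem_elim_Tset_Fset {s : Fin N ⊕ Fin N} {v : ℕ} :
    v ∈ Sum.elim (Tset C) (Fset C) s ↔ v = N + 3*M - varOf s ∨ v = N + 3*M + varOf s + 1 ∨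
      ∃ j : Fin M, ∃ l ∈ C j, l.2 = varOf s ∧
        v = if l.1 = s.isLeft then 3*j.val+3 else 3*j.val+2 := by
  rcases s with i | i <;>
  · simp only [Sum.elim_inl, Sum.elim_inr, Tset, Fset, varOf, id, Sum.isLeft_inl, Sum.isLeft_inr,
      mem_union, mem_insert, mem_singleton, mem_image, mem_filter, mem_univ, true_and, Prod.exists,
      Bool.exists_bool]
    grind

theorem sum_card_filter_le_elim_Tset_Fset_of_gt (R : Finset (Fin N ⊕ Fin N)) {t : ℕ}
    (ht : 3*M < t) :
    ∑ s ∈ R, #((Sum.elim (Tset C) (Fset C) s).filter (t ≤ ·)) =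
      #(R.filter fun s => t ≤ N + 3*M - (varOf s).val) +
        #(R.filter fun s => t ≤ N + 3*M + (varOf s).val + 1) := by
  rw [card_filter, card_filter, ← sum_add_distrib]
  refine sum_congr rfl fun s _ => ?_
  have hs := (varOf s).isLt
  have hpair : (Sum.elim (Tset C) (Fset C) s).filter (t ≤ ·) =
      ({N + 3*M - varOf s, N + 3*M + varOf s + 1} : Finset ℕ).filter (t ≤ ·) := by
    ext v
    simp only [mem_filter, mem_elim_Tset_Fset, mem_insert, mem_singleton]
    constructor
    · rintro ⟨h | h | ⟨j, l, -, -, rfl⟩, htv⟩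
      · exact ⟨Or.inl h, htv⟩
      · exact ⟨Or.inr h, htv⟩
      · have := j.isLt; split_ifs at htv <;> omega
    · rintro ⟨h | h, htv⟩
      · exact ⟨Or.inl h, htv⟩
      · exact ⟨Or.inr (Or.inl h), htv⟩
  have hne : N + 3*M - varOf s ≠ N + 3*M + varOf s + 1 := by omega
  rw [hpair, filter_insert, filter_singleton]
  split_ifs <;> simp [card_pair hne]

theorem card_filter_le_elim_Tset_Fset_le (s : Fin N ⊕ Fin N) (j : Fin M) :
    #((Sum.elim (Tset C) (Fset C) s).filter (3*j.val+4 ≤ ·)) ≤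
      2 + ∑ j' ∈ Ioi j, #((C j').filter (·.2 = varOf s)) := by
  have hsub : (Sum.elim (Tset C) (Fset C) s).filter (3*j.val+4 ≤ ·) ⊆
      {N + 3*M - varOf s, N + 3*M + varOf s + 1} ∪ (Ioi j).biUnion fun j' =>
        ((C j').filter (·.2 = varOf s)).image fun l =>
          if l.1 = s.isLeft then 3*j'.val+3 else 3*j'.val+2 := by
    intro v hv
    simp only [mem_filter, mem_elim_Tset_Fset] at hv
    simp only [mem_union, mem_insert, mem_singleton, mem_biUnion, mem_Ioi, mem_image, mem_filter]
    obtain ⟨h | h | ⟨j', l, hl, hlv, rfl⟩, hjv⟩ := hv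
    · exact Or.inl (Or.inl h)
    · exact Or.inl (Or.inr h)
    · refine Or.inr ⟨j', ?_, l, ⟨hl, hlv⟩, rfl⟩
      rw [Fin.lt_def]
      split_ifs at hjv <;> omega
  calc _ ≤ _ := card_le_card hsub
    _ ≤ 2 + ∑ j' ∈ Ioi j, #((C j').filter (·.2 = varOf s)) := by
      refine (card_union_le _ _).trans (add_le_add card_le_two (card_biUnion_le.trans ?_))
      exact sum_le_sum fun j' _ => card_image_le

theorem exists_mem_clause_of_mem_elim_Tset_Fset {s : Fin N ⊕ Fin N} {j : Fin M}
    (h : 3*j.val+3 ∈ Sum.elim (Tset C) (Fset C) s) :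
    ∃ l ∈ C j, l.2 = varOf s ∧ l.1 = s.isLeft := by
  have hs := (varOf s).isLt
  have hj := j.isLt
  obtain h | h | ⟨j', l, hl, hlv, h⟩ := (mem_elim_Tset_Fset C).mp h
  · omega
  · omega
  · by_cases hpol : l.1 = s.isLeft
    · rw [if_pos hpol] at h
      obtain rfl : j' = j := Fin.ext (by omega)
      exact ⟨l, hl, hlv, hpol⟩
    · rw [if_neg hpol] at h
      omega

theorem sum_card_filter_varOf_le {R : Finset (Fin N ⊕ Fin N)} 
    (hR : Set.InjOn varOf (R : Set (Fin N ⊕ Fin N))) (hsize : ∀ j, #(C j) ≤ 3) (j : Fin M) :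
    ∑ s ∈ R, ∑ j' ∈ Ioi j, #((C j').filter (·.2 = varOf s)) ≤ 3 * (M - 1 - j.val) := by
  calc ∑ s ∈ R, ∑ j' ∈ Ioi j, #((C j').filter (·.2 = varOf s))
      = ∑ i ∈ R.image varOf, ∑ j' ∈ Ioi j, #((C j').filter (·.2 = i)) := by
        rw [sum_image hR]
    _ ≤ ∑ i, ∑ j' ∈ Ioi j, #((C j').filter (·.2 = i)) := sum_le_sum_of_subset (subset_univ _)
    _ = ∑ j' ∈ Ioi j, #(C j') := by
      rw [sum_comm]
      exact sum_congr rfl fun j' _ => (card_eq_sum_card_fiberwise fun l _ => mem_univ l.2).symm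
    _ ≤ ∑ _j' ∈ Ioi j, 3 := sum_le_sum fun j' _ => hsize j'
    _ = 3 * (M - 1 - j.val) := by rw [sum_const, Fin.card_Ioi, smul_eq_mul, mul_comm]

section Hall

variable {C} {R : Finset (Fin N ⊕ Fin N)}
  (hall : ∀ t, 1 ≤ t →
    #(Icc t (2*N + 3*M)) ≤ ∑ s ∈ R, #((Sum.elim (Tset C) (Fset C) s).filter (t ≤ ·)))
  (hR : #R ≤ N)
include hall hR

theorem card_filter_varOf_eq_le_one (i : Fin N) : #(R.filter (varOf · = i)) ≤ 1 := by
  have hi := i.isLt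
  have hbelow : (i : ℕ) ≤ #(R.filter (varOf · < i)) := by
    have h := hall (N + 3*M + 1 - i) (by omega)
    rw [sum_card_filter_le_elim_Tset_Fset_of_gt C R (by omega), Nat.card_Icc,
      filter_congr (q := (varOf · < i)) fun s _ => by have := (varOf s).isLt; omega] at h
    have := card_filter_le R fun s => N + 3*M + 1 - i ≤ N + 3*M + varOf s + 1
    omega
  have habove : N - 1 - i ≤ #(R.filter (i < varOf ·)) := by
    have h := hall (N + 3*M + i + 2) (by omega)
    rw [sum_card_filter_le_elim_Tset_Fset_of_gt C R (by omega), Nat.card_Icc,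
      filter_false_of_mem fun s _ => by omega, card_empty,
      filter_congr (q := (i < varOf ·)) fun s _ => by omega] at h
    omega
  have hsplit : #(R.filter (varOf · < i)) + #(R.filter (varOf · = i)) +
      #(R.filter (i < varOf ·)) = #R := by
    rw [card_filter, card_filter, card_filter, card_eq_sum_ones, ← sum_add_distrib,
      ← sum_add_distrib]
    exact sum_congr rfl fun s _ => by split_ifs <;> omega
  omega

theorem injOn_varOf : Set.InjOn varOf (R : Set (Fin N ⊕ Fin N)) := fun s hs s' hs' h =>
  card_le_one.mp (card_filter_varOf_eq_le_one hall hR (varOf s)) s (mem_filter.mpr ⟨hs, rfl⟩)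
    s' (mem_filter.mpr ⟨hs', h.symm⟩)

theorem exists_mem_elim_Tset_Fset (hsize : ∀ j, #(C j) ≤ 3) (j : Fin M) :
    ∃ s ∈ R, 3*j.val+3 ∈ Sum.elim (Tset C) (Fset C) s := by
  by_contra! hnot
  have h := hall (3*j.val+3) (by omega)
  rw [sum_congr rfl fun s hs => congrArg card <| filter_congr (q := (3*j.val+4 ≤ ·)) fun v hv =>
    by have := ne_of_mem_of_not_mem hv (hnot s hs); omega, Nat.card_Icc] at h
  have hle := sum_le_sum fun s (_ : s ∈ R) => card_filter_le_elim_Tset_Fset_le C s j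
  rw [sum_add_distrib, sum_const, smul_eq_mul] at hle
  have := sum_card_filter_varOf_le C (injOn_varOf hall hR) hsize j
  have := j.isLt
  omega

end Hall

end InclusiveSetCover

open InclusiveSetCover in
/-- If the Inclusive Set Cover instance with ground set `{1,…,2N+3M}`, family
`(T_1,…,T_N,F_1,…,F_N)` and budget `k = N` is a yes-instance, then the 3-CNF formula with
clauses `C` (each a set of at most three literals) is satisfiable. -/
theorem stmt_1 {N M : ℕ} (C : Fin M → Finset (Bool × Fin N))
    (hsize : ∀ j, (C j).card ≤ 3)
    (hyes : InclusiveSetCoverYes (2*N + 3*M) (Sum.elim (Tset C) (Fset C)) N) :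
    ∃ σ : Fin N → Bool, ∀ j, ∃ l ∈ C j, σ l.2 = l.1 := by
  obtain ⟨R, f, hR, hf, hle⟩ := hyes
  have hall := fun t => card_Icc_le_sum_card_filter_le f hf hle (t := t)
  refine ⟨fun i => decide (Sum.inl i ∈ R), fun j => ?_⟩
  obtain ⟨s, hs, hmem⟩ := exists_mem_elim_Tset_Fset hall hR hsize j
  obtain ⟨l, hl, hvar, hpol⟩ := exists_mem_clause_of_mem_elim_Tset_Fset C hmem
  refine ⟨l, hl, ?_⟩
  rw [hvar, hpol]
  rcases s with i | i
  · exact decide_eq_true hs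
  · exact decide_eq_false fun h => Sum.inl_ne_inr (injOn_varOf hall hR h hs rfl)
end

section
/- Let φ be a 3-CNF formula with variables x_1,…,x_N and clauses C_1,…,C_M, each clause containing at most three literals. Set α = N + 3M and U = {1,…,2N+3M}, and for each i ∈ {1,…,N} define T_i = {α−i+1, α+i} ∪ {3j : x_i ∈ C_j} ∪ {3j−1 : ¬x_i ∈ C_j} and F_i = {α−i+1, α+i} ∪ {3j : ¬x_i ∈ C_j} ∪ {3j−1 : x_i ∈ C_j}. Suppose R is a set of indices into the family (T_1,…,T_N, F_1,…,F_N) with |R| ≤ N such that there is a surjection f from the disjoint union of the selected sets onto U with f((v,i)) ≤ v for every element (v,i). Then for every i ∈ {1,…,N}, R selects exactly one of T_i and F_i. -/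
/-!
Above `3M`, each of `T_i`, `F_i` consists of just `α − i + 1 ≤ α` and `α + i > α`, and `f` only
moves values down. The `N − m` values in `(α + m, 2N + 3M]` can only come from the elements
`α + i` with `i > m`, so at least `N − m` selected sets have index `> m`. The `N + m` values in
`(α − m, 2N + 3M]` come from the `|R| ≤ N` elements `α + i` and the elements `α − i + 1` with
`i ≤ m`, so at least `m` selected sets have index `≤ m`. As `|R| ≤ N`, exactly `m` selected sets
have index `≤ m`, for every `m ≤ N`; so exactly one has index `i`.
-/

open Finset

lemma card_filter_le_le_sum_card_filter_le_of_surjective {ι : Type*} {R : Finset ι}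
    {S : ι → Finset ℕ} {U : Finset ℕ} (f : {p : ℕ × ι // p.2 ∈ R ∧ p.1 ∈ S p.2} → {u // u ∈ U})
    (hsurj : Function.Surjective f) (hle : ∀ p, (f p : ℕ) ≤ p.1.1) (t : ℕ) :
    #(U.filter (t ≤ ·)) ≤ ∑ i ∈ R, #((S i).filter (t ≤ ·)) := by
  classical
  let g : (Σ _ : ι, ℕ) → ℕ := fun q =>
    if h : q.1 ∈ R ∧ q.2 ∈ S q.1 then f ⟨(q.2, q.1), h⟩ else 0
  calc #(U.filter (t ≤ ·))
      ≤ #((R.sigma fun i => (S i).filter (t ≤ ·)).image g) := by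
        refine card_le_card fun u hu => ?_
        obtain ⟨hu, htu⟩ := mem_filter.mp hu
        obtain ⟨⟨⟨v, i⟩, hi, hv⟩, hp⟩ := hsurj ⟨u, hu⟩
        have huv : u ≤ v := by simpa [hp] using hle ⟨(v, i), hi, hv⟩
        refine mem_image.mpr ⟨⟨i, v⟩, mem_sigma.mpr ⟨hi, mem_filter.mpr ⟨hv, htu.trans huv⟩⟩, ?_⟩
        simp [g, hi, hv, hp]
    _ ≤ _ := card_image_le
    _ = _ := card_sigma _ _

def Sum.codiag {α : Type*} : α ⊕ α → α := Sum.elim id id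

lemma xor_mem_of_card_filter_codiag_eq_one {α : Type*} [DecidableEq α] {R : Finset (α ⊕ α)}
    {i : α} (h : #(R.filter (Sum.codiag · = i)) = 1) :
    Xor' (Sum.inl i ∈ R) (Sum.inr i ∈ R) := by
  obtain ⟨a, ha⟩ := card_eq_one.mp h
  have hmem (x) : x ∈ R ∧ Sum.codiag x = i ↔ x = a := by
    simpa only [mem_filter, mem_singleton, eq_iff_iff] using congrArg (x ∈ ·) ha
  rcases a with a | a
  · obtain ⟨ha_mem, rfl⟩ := (hmem _).2 rfl
    exact Or.inl ⟨ha_mem, fun h => Sum.inr_ne_inl ((hmem _).1 ⟨h, rfl⟩)⟩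
  · obtain ⟨ha_mem, rfl⟩ := (hmem _).2 rfl
    exact Or.inr ⟨ha_mem, fun h => Sum.inl_ne_inr ((hmem _).1 ⟨h, rfl⟩)⟩

section

variable {N M : ℕ} (C : Fin M → Finset (Bool × Fin N))

lemma le_or_eq_or_eq_of_mem_elim_Tset_Fset (x : Fin N ⊕ Fin N) {v : ℕ}
    (hv : v ∈ Sum.elim (Tset C) (Fset C) x) :
    v ≤ 3*M ∨ v = N + 3*M - x.codiag ∨ v = N + 3*M + x.codiag + 1 := by
  rcases x with k | k <;>
  · simp only [Sum.elim_inl, Sum.elim_inr, Tset, Fset, mem_union, mem_insert, mem_singleton,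
      mem_image] at hv
    rcases hv with (hv | ⟨j, -, rfl⟩) | ⟨j, -, rfl⟩ <;>
      simp only [Sum.codiag, Sum.elim_inl, Sum.elim_inr, id] <;> omega

lemma card_filter_elim_Tset_Fset_le (x : Fin N ⊕ Fin N) {t : ℕ} (ht : 3*M < t) :
    #((Sum.elim (Tset C) (Fset C) x).filter (t ≤ ·)) ≤
      (if t ≤ N + 3*M - x.codiag then 1 else 0) +
        (if t ≤ N + 3*M + x.codiag + 1 then 1 else 0) := by
  calc #((Sum.elim (Tset C) (Fset C) x).filter (t ≤ ·))
      ≤ #(({N + 3*M - x.codiag, N + 3*M + x.codiag + 1} : Finset ℕ).filter (t ≤ ·)) := by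
        refine card_le_card fun v hv => ?_
        obtain ⟨hv, htv⟩ := mem_filter.mp hv
        refine mem_filter.mpr ⟨?_, htv⟩
        rcases le_or_eq_or_eq_of_mem_elim_Tset_Fset C x hv with hv | rfl | rfl
        · omega
        · exact mem_insert_self _ _
        · exact mem_insert_of_mem (mem_singleton_self _)
    _ ≤ _ := by
        rw [filter_insert, filter_singleton]
        split_ifs <;> simp [card_le_two]

variable {R : Finset (Fin N ⊕ Fin N)}
  {f : {p : ℕ × (Fin N ⊕ Fin N) // p.2 ∈ R ∧ p.1 ∈ Sum.elim (Tset C) (Fset C) p.2} →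
    {u : ℕ // u ∈ Icc 1 (2*N + 3*M)}}
  (hsurj : Function.Surjective f) (hle : ∀ p, (f p : ℕ) ≤ p.1.1)
include hsurj hle

lemma card_Icc_le_card_filter_add_card_filter {t : ℕ} (ht : 3*M < t) :
    #(Icc t (2*N + 3*M)) ≤ #(R.filter (t ≤ N + 3*M - ·.codiag)) +
      #(R.filter (t ≤ N + 3*M + ·.codiag + 1)) := by
  have hIcc : Icc t (2*N + 3*M) = (Icc 1 (2*N + 3*M)).filter (t ≤ ·) := by
    ext u; simp only [mem_Icc, mem_filter]; omega
  calc #(Icc t (2*N + 3*M))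
      ≤ ∑ x ∈ R, #((Sum.elim (Tset C) (Fset C) x).filter (t ≤ ·)) :=
        hIcc ▸ card_filter_le_le_sum_card_filter_le_of_surjective f hsurj hle t
    _ ≤ ∑ x ∈ R, ((if t ≤ N + 3*M - x.codiag then 1 else 0) +
          (if t ≤ N + 3*M + x.codiag + 1 then 1 else 0)) :=
        sum_le_sum fun x _ => card_filter_elim_Tset_Fset_le C x ht
    _ = _ := by rw [sum_add_distrib, card_filter, card_filter]

lemma sub_le_card_filter_le_codiag (m : ℕ) : N - m ≤ #(R.filter (m ≤ ·.codiag.val)) := by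
  have h := card_Icc_le_card_filter_add_card_filter C hsurj hle (t := N + 3*M + m + 1) (by omega)
  have hlow : R.filter (N + 3*M + m + 1 ≤ N + 3*M - ·.codiag) = ∅ :=
    filter_false_of_mem fun x _ => by omega
  have hhigh :
      R.filter (N + 3*M + m + 1 ≤ N + 3*M + ·.codiag + 1) = R.filter (m ≤ ·.codiag.val) :=
    filter_congr fun x _ => by omega
  rw [hlow, hhigh, Nat.card_Icc, card_empty] at h
  omega

lemma add_le_card_filter_codiag_lt_add_card {m : ℕ} (hm : m ≤ N) :
    N + m ≤ #(R.filter (·.codiag.val < m)) + #R := by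
  have h := card_Icc_le_card_filter_add_card_filter C hsurj hle (t := N + 3*M + 1 - m) (by omega)
  have hlow : R.filter (N + 3*M + 1 - m ≤ N + 3*M - ·.codiag) = R.filter (·.codiag.val < m) :=
    filter_congr fun x _ => by have := x.codiag.isLt; omega
  have hhigh : R.filter (N + 3*M + 1 - m ≤ N + 3*M + ·.codiag + 1) = R :=
    filter_true_of_mem fun x _ => by omega
  rw [hlow, hhigh, Nat.card_Icc] at h
  omega

lemma card_filter_codiag_lt (hR : #R ≤ N) {m : ℕ} (hm : m ≤ N) :
    #(R.filter (·.codiag.val < m)) = m := by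
  have hlow := add_le_card_filter_codiag_lt_add_card C hsurj hle hm
  have hhigh := sub_le_card_filter_le_codiag C hsurj hle m
  have hsplit := card_filter_add_card_filter_not (s := R) (·.codiag.val < m)
  simp only [not_lt] at hsplit
  omega

end

theorem stmt_2_general {N M : ℕ} (C : Fin M → Finset (Bool × Fin N))
    (R : Finset (Fin N ⊕ Fin N))
    (hR : R.card ≤ N)
    (f : {p : ℕ × (Fin N ⊕ Fin N) // p.2 ∈ R ∧ p.1 ∈ Sum.elim (Tset C) (Fset C) p.2} →
      {u : ℕ // u ∈ Finset.Icc 1 (2*N + 3*M)})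
    (hsurj : Function.Surjective f)
    (hle : ∀ p, (f p : ℕ) ≤ p.1.1) :
    ∀ i : Fin N, Xor' (Sum.inl i ∈ R) (Sum.inr i ∈ R) := by
  intro i
  have hsucc := card_filter_codiag_lt C hsurj hle hR (m := (i : ℕ) + 1) i.isLt
  have hself := card_filter_codiag_lt C hsurj hle hR (m := (i : ℕ)) i.isLt.le
  have hsplit : #(R.filter (·.codiag.val < (i : ℕ) + 1)) =
      #(R.filter (·.codiag.val < (i : ℕ))) + #(R.filter (·.codiag = i)) := by
    have hdisj : Disjoint (R.filter (·.codiag.val < (i : ℕ))) (R.filter (·.codiag = i)) :=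
      disjoint_filter.mpr fun x _ h h' => by rw [Fin.ext_iff] at h'; omega
    rw [← card_union_of_disjoint hdisj, ← filter_or]
    congr 1
    exact filter_congr fun x _ => by rw [Fin.ext_iff]; omega
  exact xor_mem_of_card_filter_codiag_eq_one (by omega)

/-- Suppose `R` selects indices into the family `(T_1,…,T_N,F_1,…,F_N)` with `|R| ≤ N`,
and `f` is a surjection from the disjoint union of the selected sets onto `{1,…,2N+3M}`
with `f (v,i) ≤ v` for every element. Then for every `i`, `R` selects exactly one of
`T_i` and `F_i`. -/
theorem stmt_2 {N M : ℕ} (C : Fin M → Finset (Bool × Fin N))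
    (hsize : ∀ j, (C j).card ≤ 3)
    (R : Finset (Fin N ⊕ Fin N))
    (hR : R.card ≤ N)
    (f : {p : ℕ × (Fin N ⊕ Fin N) // p.2 ∈ R ∧ p.1 ∈ Sum.elim (Tset C) (Fset C) p.2} →
      {u : ℕ // u ∈ Finset.Icc 1 (2*N + 3*M)})
    (hsurj : Function.Surjective f)
    (hle : ∀ p, (f p : ℕ) ≤ p.1.1) :
    ∀ i : Fin N, Xor' (Sum.inl i ∈ R) (Sum.inr i ∈ R) :=
  stmt_2_general C R hR f hsurj hle
end

section
/- Let n ≥ 1, U = {1,…,n}, let S = (S_1,…,S_m) be a family of nonempty subsets of U, and let k ≤ m. Define trees P and T as follows. P has a center vertex p with 3n⁴ pendant leaves; additionally p is adjacent to the centers of stars R_1,…,R_n (where R_i has exactly i leaves), X_1,…,X_{m−k} (each with n³ leaves), and Y_1,…,Y_k (each with n² leaves). T has a center vertex t with 3n⁴ pendant leaves; additionally t is adjacent to vertices t_1,…,t_m, where each t_i has n³ pendant leaves, one neighbour for each s ∈ S_i that is the center of a star with s leaves, and one further neighbour that is the center of a star with n² leaves. If the Inclusive Set Cover instance ⟨U,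 S, k⟩ is a yes-instance, then P is a minor of T. -/
/-- A minor embedding of `P` in `T`: a surjective `f : V(T) → V(P)` with connected preimages
of vertices such that every edge of `P` is realized by an edge of `T`. -/
def IsMinorEmbedding {V W : Type*} (T : SimpleGraph V) (P : SimpleGraph W) (f : V → W) : Prop :=
  Function.Surjective f ∧
  (∀ w : W, ((T.induce (f ⁻¹' {w})).Connected)) ∧
  (∀ ⦃u v : W⦄, P.Adj u v → ∃ u' v', T.Adj u' v' ∧ f u' = u ∧ f v' = v)

/-- Vertices of the pattern tree `P`: a center `p` with `3n⁴` pendant leaves, adjacent to the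
centers of stars `R_1,…,R_n` (`R_i` having `i` leaves, the index `i : Fin n` standing for the
1-based value `i+1`), `X_1,…,X_{m−k}` (each with `n³` leaves), and `Y_1,…,Y_k` (each with `n²`
leaves). -/
inductive PVert (n m k : ℕ) : Type
  | p : PVert n m k
  | pleaf : Fin (3*n^4) → PVert n m k
  | rcenter : Fin n → PVert n m k
  | rleaf : (i : Fin n) → Fin (i.val + 1) → PVert n m k
  | xcenter : Fin (m - k) → PVert n m k
  | xleaf : Fin (m - k) → Fin (n^3) → PVert n m k
  | ycenter : Fin k → PVert n m k
  | yleaf : Fin k → Fin (n^2) → PVert n m k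

/-- Base adjacency relation for the tree `P`. -/
def PRel (n m k : ℕ) : PVert n m k → PVert n m k → Prop
  | .p, .pleaf _ => True
  | .p, .rcenter _ => True
  | .p, .xcenter _ => True
  | .p, .ycenter _ => True
  | .rcenter i, .rleaf i' _ => i = i'
  | .xcenter i, .xleaf i' _ => i = i'
  | .ycenter i, .yleaf i' _ => i = i'
  | _, _ => False

/-- The tree `P`. -/
def Pgraph (n m k : ℕ) : SimpleGraph (PVert n m k) := SimpleGraph.fromRel (PRel n m k)

/-- Vertices of the host tree `T`: a center `t` with `3n⁴` pendant leaves, adjacent to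
`t_1,…,t_m`, where each `t_i` has `n³` pendant leaves, for every `s ∈ S_i` a neighbour which
is the center of a star with `s` leaves, and one further neighbour which is the center of a
star with `n²` leaves. -/
inductive TVert (n m : ℕ) (S : Fin m → Finset ℕ) : Type
  | t : TVert n m S
  | tleaf : Fin (3*n^4) → TVert n m S
  | ti : Fin m → TVert n m S
  | tileaf : Fin m → Fin (n^3) → TVert n m S
  | scenter : (i : Fin m) → {s : ℕ // s ∈ S i} → TVert n m S
  | sleaf : (i : Fin m) → (s : {s : ℕ // s ∈ S i}) → Fin s.val → TVert n m S
  | ycenter : Fin m → TVert n m S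
  | yleaf : Fin m → Fin (n^2) → TVert n m S

/-- Base adjacency relation for the tree `T`. -/
def TRel (n m : ℕ) (S : Fin m → Finset ℕ) : TVert n m S → TVert n m S → Prop
  | .t, .tleaf _ => True
  | .t, .ti _ => True
  | .ti i, .tileaf i' _ => i = i'
  | .ti i, .scenter i' _ => i = i'
  | .ti i, .ycenter i' => i = i'
  | .scenter i s, .sleaf i' s' _ => i = i' ∧ (s : ℕ) = (s' : ℕ)
  | .ycenter i, .yleaf i' _ => i = i'
  | _, _ => False

/-- The tree `T`. -/
def Tgraph (n m : ℕ) (S : Fin m → Finset ℕ) : SimpleGraph (TVert n m S) :=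
  SimpleGraph.fromRel (TRel n m S)

/-!
Contract `T` onto `P`. Pad the cover to exactly `k` selected sets; each unselected branch `t_i`
collapses onto its own star `X_j` (the `n³` leaves of `t_i` onto those of `X_j`, all else onto its
center), and each selected branch sends `t_i` to `p` and its `n²`-star onto its own `Y_j`. For
`u ∈ U` the cover gives a selected `S_i ∋ s` with `s ≥ u`, a different pair `(s, i)` for each
`u`; the star with `s` leaves at `t_i` is contracted onto `R_u`, its surplus leaves merging into
the center. Everything else goes to `p`. Each fibre is connected because every vertex other than a
chosen root of its fibre lies in the same fibre as its parent towards `t`.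
-/

theorem SimpleGraph.connected_induce_preimage_of_descent {V W : Type*} (G : SimpleGraph V)
    {f : V → W} {s : W → V} (hs : ∀ w, f (s w) = w) (d : V → ℕ)
    (hdesc : ∀ v, v = s (f v) ∨ ∃ v', G.Adj v v' ∧ f v' = f v ∧ d v' < d v) (w : W) :
    (G.induce (f ⁻¹' {w})).Connected := by
  have reach_root : ∀ v (hv : f v = w),
      (G.induce (f ⁻¹' {w})).Reachable ⟨v, hv⟩ ⟨s w, hs w⟩ := by
    intro v
    induction v using (measure d).wf.induction with
    | h v ih =>
      intro hv
      rcases hdesc v with hroot | ⟨v', hadj, hfv', hlt⟩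
      · have : (⟨v, hv⟩ : f ⁻¹' {w}) = ⟨s w, hs w⟩ :=
          Subtype.ext (hroot.trans (congrArg s hv))
        rw [this]
      · have hv' : f v' = w := hfv'.trans hv
        exact (SimpleGraph.Adj.reachable (G := G.induce _) (u := ⟨v, hv⟩) (v := ⟨v', hv'⟩)
          hadj).trans (ih v' hlt hv')
  have : Nonempty (f ⁻¹' {w}) := ⟨⟨s w, hs w⟩⟩
  exact ⟨fun a b => (reach_root a a.2).trans (reach_root b b.2).symm⟩

theorem SimpleGraph.exists_adj_of_fromRel_adj {V W : Type*} (G : SimpleGraph V) {r : W → W → Prop}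
    {f : V → W} (hr : ∀ ⦃u v⦄, r u v → ∃ u' v', G.Adj u' v' ∧ f u' = u ∧ f v' = v)
    {u v : W} (huv : (SimpleGraph.fromRel r).Adj u v) :
    ∃ u' v', G.Adj u' v' ∧ f u' = u ∧ f v' = v := by
  obtain ⟨-, h | h⟩ := SimpleGraph.fromRel_adj _ _ _ |>.mp huv
  · exact hr h
  · obtain ⟨u', v', hadj, rfl, rfl⟩ := hr h
    exact ⟨v', u', hadj.symm, rfl, rfl⟩

theorem Finset.exists_equiv_sum_fin_mem_inr {α : Type*} [Fintype α] [DecidableEq α]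
    {R : Finset α} {k : ℕ} (hR : R.card ≤ k) (hk : k ≤ Fintype.card α) :
    ∃ e : α ≃ Fin (Fintype.card α - k) ⊕ Fin k, ∀ i ∈ R, ∃ j, e i = .inr j := by
  obtain ⟨R', hRR', hcard⟩ := Finset.exists_superset_card_eq hR hk
  have hin : Fintype.card {i // i ∈ R'} = k := by simpa using hcard
  have hout : Fintype.card {i // i ∉ R'} = Fintype.card α - k := by
    rw [Fintype.card_subtype_compl, hin]
  refine ⟨(Equiv.sumCompl (· ∈ R')).symm.trans ((Equiv.sumComm _ _).trans
    (Equiv.sumCongr (Fintype.equivFinOfCardEq hout) (Fintype.equivFinOfCardEq hin))), ?_⟩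
  intro i hi
  simp [Equiv.sumCompl_symm_apply_of_pos (hRR' hi)]

namespace TVert

variable {n m : ℕ} {S : Fin m → Finset ℕ}

def parent : TVert n m S → TVert n m S
  | t => t
  | tleaf _ => t
  | ti _ => t
  | tileaf i _ => ti i
  | scenter i _ => ti i
  | sleaf i s _ => scenter i s
  | ycenter i => ti i
  | yleaf i _ => ycenter i

def depth : TVert n m S → ℕ
  | t => 0
  | tleaf _ | ti _ => 1
  | tileaf _ _ | scenter _ _ | ycenter _ => 2
  | sleaf _ _ _ | yleaf _ _ => 3

theorem adj_parent {v : TVert n m S} (hv : v ≠ t) : (Tgraph n m S).Adj v v.parent := by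
  cases v <;> simp_all [Tgraph, TRel, parent]

theorem depth_parent_lt {v : TVert n m S} (hv : v ≠ t) : v.parent.depth < v.depth := by
  cases v <;> simp_all [parent, depth]

end TVert

/-- A certificate for the reduction: `split i = .inl j` sends the branch of `t_i` onto `X_j`
and `split i = .inr j` onto `Y_j`; `rep u = (s, i)` names the star of `t_i` with `s ≥ u + 1`
leaves that is contracted onto `R_{u+1}`. -/
structure SelectedCover (n m k : ℕ) (S : Fin m → Finset ℕ) where
  split : Fin m ≃ Fin (m - k) ⊕ Fin k
  rep : Fin n → ℕ × Fin m
  rep_injective : Function.Injective rep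
  rep_mem : ∀ u, (rep u).1 ∈ S (rep u).2
  lt_rep : ∀ u : Fin n, u.val < (rep u).1
  split_rep : ∀ u, ∃ j, split (rep u).2 = .inr j

theorem InclusiveSetCoverYes.nonempty_selectedCover {n m k : ℕ} {S : Fin m → Finset ℕ}
    (h : InclusiveSetCoverYes n S k) (hk : k ≤ m) : Nonempty (SelectedCover n m k S) := by
  obtain ⟨R, f, hcard, hsurj, hle⟩ := h
  have hsplit := Finset.exists_equiv_sum_fin_mem_inr hcard (hk.trans_eq (Fintype.card_fin m).symm)
  rw [Fintype.card_fin] at hsplit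
  obtain ⟨e, he⟩ := hsplit
  let succIcc : Fin n → {u // u ∈ Finset.Icc 1 n} := fun u => ⟨u + 1, by simp⟩
  have succIcc_injective : Function.Injective succIcc := fun u v huv => by
    simpa [succIcc, Fin.ext_iff] using huv
  let q := Function.surjInv hsurj ∘ succIcc
  refine ⟨{
    split := e
    rep := fun u => (q u).1
    rep_injective := Subtype.val_injective.comp
      ((Function.injective_surjInv hsurj).comp succIcc_injective)
    rep_mem := fun u => (q u).2.2
    lt_rep := fun u => ?_
    split_rep := fun u => he _ (q u).2.1 }⟩
  have hq : (f (q u) : ℕ) = u + 1 := congrArg Subtype.val (Function.surjInv_eq hsurj (succIcc u))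
  have := hle (q u)
  omega

namespace SelectedCover

variable {n m k : ℕ} {S : Fin m → Finset ℕ} (C : SelectedCover n m k S)

def hub (i : Fin m) : PVert n m k :=
  match C.split i with
  | .inl j => .xcenter j
  | .inr _ => .p

noncomputable def contract : TVert n m S → PVert n m k
  | .t => .p
  | .tleaf j => .pleaf j
  | .ti i => C.hub i
  | .tileaf i a =>
    match C.split i with
    | .inl j => .xleaf j a
    | .inr _ => .p
  | .scenter i s =>
    match Function.partialInv C.rep (s, i) with
    | some u => .rcenter u
    | none => C.hub i
  | .sleaf i s a =>
    match Function.partialInv C.rep (s, i) with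
    | some u => if h : a.val < u.val + 1 then .rleaf u ⟨a, h⟩ else .rcenter u
    | none => C.hub i
  | .ycenter i =>
    match C.split i with
    | .inl j => .xcenter j
    | .inr j => .ycenter j
  | .yleaf i a =>
    match C.split i with
    | .inl j => .xcenter j
    | .inr j => .yleaf j a

def root : PVert n m k → TVert n m S
  | .p => .t
  | .pleaf j => .tleaf j
  | .rcenter u => .scenter (C.rep u).2 ⟨(C.rep u).1, C.rep_mem u⟩
  | .rleaf u a => .sleaf (C.rep u).2 ⟨(C.rep u).1, C.rep_mem u⟩ ⟨a, a.2.trans_le (C.lt_rep u)⟩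
  | .xcenter j => .ti (C.split.symm (.inl j))
  | .xleaf j a => .tileaf (C.split.symm (.inl j)) a
  | .ycenter j => .ycenter (C.split.symm (.inr j))
  | .yleaf j a => .yleaf (C.split.symm (.inr j)) a

theorem contract_root (w : PVert n m k) : C.contract (C.root w) = w := by
  cases w <;> simp [contract, root, hub, Function.partialInv_left C.rep_injective, Fin.is_le]

theorem root_rcenter_of_rep_eq {u : Fin n} {i : Fin m} {s : {s // s ∈ S i}}
    (h : C.rep u = ((s : ℕ), i)) : C.root (.rcenter u) = .scenter i s := by
  obtain ⟨s, hs⟩ := s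
  obtain rfl : (C.rep u).2 = i := congrArg Prod.snd h
  obtain rfl : (C.rep u).1 = s := congrArg Prod.fst h
  rfl

theorem root_rleaf_of_rep_eq {u : Fin n} {i : Fin m} {s : {s // s ∈ S i}}
    (h : C.rep u = ((s : ℕ), i)) (a : Fin s) (ha : a.val < u.val + 1) :
    C.root (.rleaf u ⟨a, ha⟩) = .sleaf i s a := by
  obtain ⟨s, hs⟩ := s
  obtain rfl : (C.rep u).2 = i := congrArg Prod.snd h
  obtain rfl : (C.rep u).1 = s := congrArg Prod.fst h
  rfl

theorem eq_root_or_contract_parent (v : TVert n m S) :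
    v = C.root (C.contract v) ∨ (v ≠ .t ∧ C.contract v.parent = C.contract v) := by
  have hrep := C.rep_injective.isPartialInv
  cases v with
  | t | tleaf _ => exact .inl rfl
  | ti i | tileaf i _ | ycenter i | yleaf i _ =>
    rcases hi : C.split i with j | j <;>
      simp [contract, root, hub, TVert.parent, hi, Equiv.eq_symm_apply]
  | scenter i s =>
    rcases hs : Function.partialInv C.rep (s, i) with _ | u
    · simp [contract, TVert.parent, hs]
    · simp only [contract, hs]
      exact .inl (C.root_rcenter_of_rep_eq ((hrep _ _).mp hs)).symm
  | sleaf i s a =>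
    rcases hs : Function.partialInv C.rep (s, i) with _ | u
    · simp [contract, TVert.parent, hs]
    · by_cases ha : a.val < u.val + 1
      · simp only [contract, hs, dif_pos ha]
        exact .inl (C.root_rleaf_of_rep_eq ((hrep _ _).mp hs) a ha).symm
      · simp [contract, TVert.parent, hs, ha]

theorem exists_adj_contract_eq (v : TVert n m S) :
    v = C.root (C.contract v) ∨ ∃ v', (Tgraph n m S).Adj v v' ∧ C.contract v' = C.contract v ∧
      v'.depth < v.depth := by
  rcases C.eq_root_or_contract_parent v with hv | ⟨hv, hpar⟩
  · exact .inl hv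
  · exact .inr ⟨v.parent, TVert.adj_parent hv, hpar, TVert.depth_parent_lt hv⟩

theorem contract_parent_root {u v : PVert n m k} (h : PRel n m k u v) :
    C.contract (C.root v).parent = u := by
  cases u <;> cases v <;> simp only [PRel] at h <;> try subst h
  case p.rcenter u =>
    obtain ⟨j, hj⟩ := C.split_rep u
    simp [root, contract, hub, TVert.parent, hj]
  case rcenter.rleaf u _ => exact C.contract_root (.rcenter u)
  case xcenter.xleaf j _ => exact C.contract_root (.xcenter j)
  case ycenter.yleaf j _ => exact C.contract_root (.ycenter j)
  all_goals simp [root, contract, hub, TVert.parent]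

theorem root_ne_t_of_rel {u v : PVert n m k} (h : PRel n m k u v) : C.root v ≠ .t := by
  cases u <;> cases v <;> simp_all [PRel, root]

theorem exists_adj_of_rel {u v : PVert n m k} (h : PRel n m k u v) :
    ∃ u' v', (Tgraph n m S).Adj u' v' ∧ C.contract u' = u ∧ C.contract v' = v :=
  ⟨_, _, (TVert.adj_parent (C.root_ne_t_of_rel h)).symm, C.contract_parent_root h,
    C.contract_root v⟩

end SelectedCover

theorem stmt_3_general {n m k : ℕ} (S : Fin m → Finset ℕ) (hk : k ≤ m)
    (hyes : InclusiveSetCoverYes n S k) :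
    ∃ f : TVert n m S → PVert n m k,
      IsMinorEmbedding (Tgraph n m S) (Pgraph n m k) f := by
  obtain ⟨C⟩ := hyes.nonempty_selectedCover hk
  exact ⟨C.contract, Function.RightInverse.surjective C.contract_root,
    SimpleGraph.connected_induce_preimage_of_descent _ C.contract_root _ C.exists_adj_contract_eq,
    fun _ _ => SimpleGraph.exists_adj_of_fromRel_adj _ fun _ _ => C.exists_adj_of_rel⟩

/-- If the Inclusive Set Cover instance `⟨{1,…,n}, S, k⟩` (with `n ≥ 1`, all `S_i` nonempty
subsets of `{1,…,n}`, and `k ≤ m`) is a yes-instance, then `P` is a minor of `T`. -/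
theorem stmt_3 {n m k : ℕ} (hn : 1 ≤ n) (S : Fin m → Finset ℕ)
    (hS : ∀ i, (S i).Nonempty ∧ S i ⊆ Finset.Icc 1 n) (hk : k ≤ m)
    (hyes : InclusiveSetCoverYes n S k) :
    ∃ f : TVert n m S → PVert n m k,
      IsMinorEmbedding (Tgraph n m S) (Pgraph n m k) f :=
  stmt_3_general S hk hyes
end

section
/- Let n ≥ 2, U = {1,…,n}, let S = (S_1,…,S_m) be a family of nonempty subsets of U, and let k ≤ m. Define trees P and T as follows. P has a center vertex p with 3n⁴ pendant leaves; additionally p is adjacent to the centers of stars R_1,…,R_n (where R_i has exactly i leaves), X_1,…,X_{m−k} (each with n³ leaves), and Y_1,…,Y_k (each with n² leaves). T has a center vertex t with 3n⁴ pendant leaves; additionally t is adjacent to vertices t_1,…,t_m, where each t_i has n³ pendant leaves, one neighbour for each s ∈ S_i that is the center of a star with s leaves, and one further neighbour that is the center of a star with n² leaves. If P is a minor of T, then the Inclusive Set Cover instance ⟨U, S, k⟩ is a yes-instance. -/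
/-!
Root `T` at `t`. A connected branch set that meets the subtree below a vertex `r` and also its
complement must contain `r` and its parent. Hence if `f t ≠ p`, the branch set of `p` lies below
a single child of `t`, and that part of `T` is too small to supply `3n⁴` distinct neighbours for
the leaves of `p`; so `f t = p`. For a star centre `w` of `P` the branch set of `w` then has a top
vertex `r` whose parent belongs to `p`, and the leaves of `w` are realised strictly below `r`, so
`r` is some `t_i`, the `n²`-star centre below `t_i`, or an `s`-star centre with at least as many
leaves as `w`. Size forces every `X_j` onto a `t_i` and every `Y_j` onto a `t_i` or an
`n²`-star, each branch below a `t_i` hosts at most one of them, and these `m` branches are all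
used up. So each `R_u` sits on an `s`-star with `u ≤ s` below a `t_i` that belongs to `p`; at most
`k` such `t_i` exist, the others carrying the `X_j`, and `u ↦ (s, i)` is injective.
-/

theorem le_card_of_injective_of_mem_range {α β : Type*} [Fintype β] {q : ℕ} {v : Fin q → α}
    (hv : Function.Injective v) {g : β → α} (h : ∀ j, v j ∈ Set.range g) :
    q ≤ Fintype.card β := by
  choose u hu using h
  simpa using Fintype.card_le_of_injective u fun a b hab => hv (by rw [← hu a, ← hu b, hab])

/-- The surjection sends `σ u` to `u + 1` and everything else to `1`. -/
theorem inclusiveSetCoverYes_of_injective {ι : Type*} {n k : ℕ} {S : ι → Finset ℕ}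
    (hS : ∀ i, S i ⊆ Finset.Icc 1 n) (R : Finset ι) (hR : R.card ≤ k)
    (σ : Fin n → ℕ × ι) (hσ : Function.Injective σ)
    (hmem : ∀ u, (σ u).2 ∈ R ∧ (σ u).1 ∈ S (σ u).2)
    (hle : ∀ u, u.val + 1 ≤ (σ u).1) : InclusiveSetCoverYes n S k := by
  classical
  have hbound (x : {x : ℕ × ι // x.2 ∈ R ∧ x.1 ∈ S x.2}) : 1 ≤ x.1.1 ∧ x.1.1 ≤ n :=
    Finset.mem_Icc.mp (hS _ x.2.2)
  refine ⟨R, fun x => if h : ∃ u, σ u = x.1 then ⟨h.choose + 1, ?_⟩ else ⟨1, ?_⟩,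
    hR, ?_, ?_⟩
  · have := h.choose.isLt
    simp only [Finset.mem_Icc]
    omega
  · simp only [Finset.mem_Icc]
    have := hbound x
    omega
  · rintro ⟨a, ha⟩
    have ha' := Finset.mem_Icc.mp ha
    have h : ∃ u, σ u = σ ⟨a - 1, by omega⟩ := ⟨_, rfl⟩
    refine ⟨⟨_, hmem ⟨a - 1, by omega⟩⟩, ?_⟩
    simp only [dif_pos h, hσ h.choose_spec, Subtype.mk.injEq]
    omega
  · intro x
    dsimp only
    split_ifs with h
    · simpa only [h.choose_spec] using hle h.choose
    · exact (hbound x).1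

namespace TVert

variable {n m : ℕ} {S : Fin m → Finset ℕ}

def IsAncestor (r v : TVert n m S) : Prop := ∃ j, parent^[j] v = r

theorem parent_iterate_three (v : TVert n m S) : parent^[3] v = t := by
  cases v <;> rfl

theorem IsAncestor.refl (v : TVert n m S) : IsAncestor v v := ⟨0, rfl⟩

theorem IsAncestor.of_parent {r v : TVert n m S} (h : IsAncestor r (parent v)) :
    IsAncestor r v :=
  let ⟨j, hj⟩ := h; ⟨j + 1, hj⟩

theorem eq_t_of_isAncestor_t {r : TVert n m S} (h : IsAncestor r t) : r = t := by
  obtain ⟨j, rfl⟩ := h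
  exact Function.iterate_fixed rfl j

theorem eq_of_isAncestor_of_forall_parent_ne {r v : TVert n m S} (h : IsAncestor r v)
    (hr : ∀ c, parent c ≠ r) : v = r := by
  obtain ⟨_ | j, rfl⟩ := h
  · rfl
  · exact absurd (Function.iterate_succ_apply' parent j v).symm (hr _)

theorem eq_parent_of_rel {u v : TVert n m S} (h : TRel n m S u v) : u = parent v := by
  cases u <;> cases v <;> simp_all [TRel, parent]
  obtain ⟨rfl, h⟩ := h
  exact heq_of_eq (Subtype.ext h)

theorem eq_parent_of_adj {u v : TVert n m S} (h : (Tgraph n m S).Adj u v) :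
    u = parent v ∨ v = parent u :=
  h.2.imp eq_parent_of_rel eq_parent_of_rel

theorem eq_of_adj_of_isAncestor {r u v : TVert n m S} (h : (Tgraph n m S).Adj u v)
    (hv : IsAncestor r v) (hu : ¬ IsAncestor r u) : v = r ∧ u = parent r := by
  rcases eq_parent_of_adj h with rfl | rfl
  · obtain ⟨_ | j, hj⟩ := hv
    · exact ⟨hj, hj ▸ rfl⟩
    · exact absurd ⟨j, hj⟩ hu
  · exact absurd hv.of_parent hu

theorem exists_child_of_isAncestor {r v : TVert n m S} (h : IsAncestor r v) (hv : v ≠ r) :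
    ∃ c, parent c = r ∧ IsAncestor c v := by
  obtain ⟨_ | j, rfl⟩ := h
  · exact absurd rfl hv
  · exact ⟨parent^[j] v, (Function.iterate_succ_apply' parent j v).symm, j, rfl⟩

theorem mem_range_sleaf_of_isAncestor {i : Fin m} {s : S i} {v : TVert n m S}
    (h : IsAncestor (scenter i s) v) (hv : v ≠ scenter i s) : v ∈ Set.range (sleaf i s) := by
  obtain ⟨c, hc, hcv⟩ := exists_child_of_isAncestor h hv
  cases c <;> simp only [parent, reduceCtorEq] at hc
  cases hc
  rw [eq_of_isAncestor_of_forall_parent_ne hcv (fun c => by cases c <;> simp [parent])]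
  exact ⟨_, rfl⟩

theorem mem_range_yleaf_of_isAncestor {i : Fin m} {v : TVert n m S}
    (h : IsAncestor (ycenter i) v) (hv : v ≠ ycenter i) : v ∈ Set.range (yleaf i) := by
  obtain ⟨c, hc, hcv⟩ := exists_child_of_isAncestor h hv
  cases c <;> simp only [parent, reduceCtorEq] at hc
  cases hc
  rw [eq_of_isAncestor_of_forall_parent_ne hcv (fun c => by cases c <;> simp [parent])]
  exact ⟨_, rfl⟩

/-- Indexes `t` together with the subtree below `t_i`; `Option (Fin s)` stands for a star with
`s` leaves, `none` being its centre. -/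
abbrev BranchIndex (n : ℕ) (A : Finset ℕ) : Type :=
  Option (Option (Fin (n ^ 3) ⊕ (Σ s : A, Option (Fin s)) ⊕ Option (Fin (n ^ 2))))

def ofBranchIndex (i : Fin m) : BranchIndex n (S i) → TVert n m S
  | none => t
  | some none => ti i
  | some (some (.inl l)) => tileaf i l
  | some (some (.inr (.inl ⟨s, none⟩))) => scenter i s
  | some (some (.inr (.inl ⟨s, some l⟩))) => sleaf i s l
  | some (some (.inr (.inr none))) => ycenter i
  | some (some (.inr (.inr (some l)))) => yleaf i l

theorem mem_range_ofBranchIndex {i : Fin m} {v : TVert n m S} (h : IsAncestor (ti i) v ∨ v = t) :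
    v ∈ Set.range (ofBranchIndex i) := by
  rcases h with h | rfl
  · by_cases hv : v = ti i
    · exact ⟨some none, hv.symm⟩
    obtain ⟨c, hc, hcv⟩ := exists_child_of_isAncestor h hv
    cases c with
    | tileaf i' l =>
      obtain rfl : i' = i := ti.inj hc
      rw [eq_of_isAncestor_of_forall_parent_ne hcv (fun c => by cases c <;> simp [parent])]
      exact ⟨some (some (.inl l)), rfl⟩
    | scenter i' s =>
      obtain rfl : i' = i := ti.inj hc
      by_cases hvs : v = scenter i' s
      · exact ⟨some (some (.inr (.inl ⟨s, none⟩))), hvs.symm⟩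
      obtain ⟨l, rfl⟩ := mem_range_sleaf_of_isAncestor hcv hvs
      exact ⟨some (some (.inr (.inl ⟨s, some l⟩))), rfl⟩
    | ycenter i' =>
      obtain rfl : i' = i := ti.inj hc
      by_cases hvy : v = ycenter i'
      · exact ⟨some (some (.inr (.inr none))), hvy.symm⟩
      obtain ⟨l, rfl⟩ := mem_range_yleaf_of_isAncestor hcv hvy
      exact ⟨some (some (.inr (.inr (some l)))), rfl⟩
    | _ => simp [parent] at hc
  · exact ⟨none, rfl⟩

theorem card_branchIndex_le {A : Finset ℕ} (hA : A ⊆ Finset.Icc 1 n) :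
    Fintype.card (BranchIndex n A) ≤ n ^ 3 + n ^ 2 + n * (n + 1) + 3 := by
  have hsum : ∑ s : A, ((s : ℕ) + 1) ≤ n * (n + 1) := by
    calc ∑ s : A, ((s : ℕ) + 1) ≤ ∑ _s : A, (n + 1) :=
          Finset.sum_le_sum fun s _ => by have := (Finset.mem_Icc.mp (hA s.2)).2; omega
      _ ≤ n * (n + 1) := by
          simpa using Nat.mul_le_mul_right (n + 1) ((Finset.card_le_card hA).trans (by simp))
  simp only [Fintype.card_option, Fintype.card_sum, Fintype.card_sigma, Fintype.card_fin]
  omega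

theorem exists_eq_tleaf_or_isAncestor_ti {x : TVert n m S} (hx : x ≠ t) :
    (∃ j, x = tleaf j) ∨ ∃ i, IsAncestor (ti i) x := by
  cases x with
  | t => exact absurd rfl hx
  | tleaf j => exact .inl ⟨j, rfl⟩
  | ti i => exact .inr ⟨i, 0, rfl⟩
  | tileaf i _ | scenter i _ | ycenter i => exact .inr ⟨i, 1, rfl⟩
  | sleaf i _ _ | yleaf i _ => exact .inr ⟨i, 2, rfl⟩

theorem isAncestor_or_eq_parent_of_adj {B : Set (TVert n m S)} {c u v : TVert n m S}
    (hB : ∀ b ∈ B, IsAncestor c b) (hu : u ∈ B) (huv : (Tgraph n m S).Adj u v) :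
    IsAncestor c v ∨ v = parent c :=
  or_iff_not_imp_left.mpr fun hv => (eq_of_adj_of_isAncestor huv.symm (hB u hu) hv).2

section Connected

variable {B : Set (TVert n m S)}

theorem mem_and_parent_mem_of_connected (hB : ((Tgraph n m S).induce B).Connected)
    {r a b : TVert n m S} (ha : a ∈ B) (hb : b ∈ B) (hra : IsAncestor r a)
    (hrb : ¬ IsAncestor r b) : r ∈ B ∧ parent r ∈ B := by
  obtain ⟨W⟩ := hB.preconnected ⟨a, ha⟩ ⟨b, hb⟩
  obtain ⟨d, -, hd, hd'⟩ := W.exists_boundary_dart {x | IsAncestor r x.1} hra hrb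
  obtain ⟨hfst, hsnd⟩ := eq_of_adj_of_isAncestor d.adj.symm hd hd'
  exact ⟨hfst ▸ d.fst.2, hsnd ▸ d.snd.2⟩

theorem isAncestor_of_connected (hB : ((Tgraph n m S).induce B).Connected)
    {r a : TVert n m S} (ha : a ∈ B) (hra : IsAncestor r a) (hr : parent r ∉ B) :
    ∀ b ∈ B, IsAncestor r b := fun _ hb => by
  by_contra hrb
  exact hr (mem_and_parent_mem_of_connected hB ha hb hra hrb).2

theorem exists_top_of_connected (hB : ((Tgraph n m S).induce B).Connected)
    {x : TVert n m S} (hx : x ∈ B) (ht : t ∉ B) :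
    ∃ r ∈ B, parent r ∉ B ∧ ∀ b ∈ B, IsAncestor r b := by
  suffices ∃ r ∈ B, parent r ∉ B ∧ IsAncestor r x from
    let ⟨r, hr, hpr, hrx⟩ := this; ⟨r, hr, hpr, isAncestor_of_connected hB hx hrx hpr⟩
  by_cases h2 : parent^[2] x ∈ B
  · refine ⟨_, h2, ?_, 2, rfl⟩
    rwa [← Function.iterate_succ_apply' parent 2 x, parent_iterate_three]
  by_cases h1 : parent x ∈ B
  · exact ⟨_, h1, h2, 1, rfl⟩
  · exact ⟨x, hx, h1, .refl x⟩

end Connected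

theorem scenter_congr {i i' : Fin m} {s : S i} {s' : S i'}
    (hi : i = i') (hs : (s : ℕ) = s') : (scenter i s : TVert n m S) = scenter i' s' := by
  subst hi
  rw [Subtype.ext hs]

end TVert

open TVert

section Occupies

variable {n m k : ℕ} {S : Fin m → Finset ℕ} {f : TVert n m S → PVert n m k}

/-- At most one vertex other than `p` occupies the branch below a given `t_i` (`Occupies.eq`);
this is what the centres of `X_j`, `Y_j` and a misplaced `R_u` compete for. -/
def Occupies (f : TVert n m S → PVert n m k) (i : Fin m) (w : PVert n m k) : Prop :=
  f (ti i) = w ∨ (f (ycenter i) = w ∧ f (ti i) = .p)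

theorem Occupies.eq {i : Fin m} {w w' : PVert n m k} (h : Occupies f i w) (h' : Occupies f i w')
    (hw : w ≠ .p) (hw' : w' ≠ .p) : w = w' := by
  rcases h with h | ⟨h, hp⟩ <;> rcases h' with h' | ⟨h', hp'⟩
  · exact h.symm.trans h'
  · exact absurd (h.symm.trans hp') hw
  · exact absurd (h'.symm.trans hp) hw'
  · exact h.symm.trans h'

theorem card_le_of_occupies {α : Type*} [Fintype α] {w : α → PVert n m k}
    (hw : Function.Injective w) (hwp : ∀ a, w a ≠ .p) (h : ∀ a, ∃ i, Occupies f i (w a)) :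
    Fintype.card α ≤ m := by
  choose i hi using h
  simpa using Fintype.card_le_of_injective i fun a b hab =>
    hw ((hi a).eq (hab ▸ hi b) (hwp a) (hwp b))

end Occupies

namespace IsMinorEmbedding

variable {n m k : ℕ} {S : Fin m → Finset ℕ} {f : TVert n m S → PVert n m k}
  (hf : IsMinorEmbedding (Tgraph n m S) (Pgraph n m k) f)
include hf

theorem exists_realizer_below {c : TVert n m S} {w w' : PVert n m k}
    (hc : ∀ b, f b = w → IsAncestor c b) (hww' : (Pgraph n m k).Adj w w') :
    ∃ v, f v = w' ∧ (IsAncestor c v ∨ v = parent c) := by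
  obtain ⟨u, v, huv, hu, hv⟩ := hf.2.2 hww'
  exact ⟨v, hv, isAncestor_or_eq_parent_of_adj hc hu huv⟩

theorem apply_t (hn : 2 ≤ n) (hS : ∀ i, S i ⊆ Finset.Icc 1 n) : f t = .p := by
  by_contra hft
  obtain ⟨x, hx⟩ := hf.1 .p
  have hxt : x ≠ t := by rintro rfl; exact hft hx
  have below : ∀ c, IsAncestor c x → parent c = t →
      ∀ j : Fin (3 * n ^ 4), ∃ v, f v = .pleaf j ∧ (IsAncestor c v ∨ v = t) :=
    fun c hcx hc j =>
      hc ▸ hf.exists_realizer_below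
        (isAncestor_of_connected (hf.2.1 .p) hx hcx (hc ▸ hft)) (by simp [Pgraph, PRel])
  have hinj : ∀ {v : Fin (3 * n ^ 4) → TVert n m S}, (∀ j, f (v j) = .pleaf j) →
      Function.Injective v := fun hv a b hab => PVert.pleaf.inj (by rw [← hv a, ← hv b, hab])
  rcases exists_eq_tleaf_or_isAncestor_ti hxt with ⟨j₀, rfl⟩ | ⟨i, hix⟩
  · choose v hv hvt using below _ (.refl _) rfl
    have hle := le_card_of_injective_of_mem_range (hinj hv) (g := ![tleaf j₀, t]) fun j => by
      rcases hvt j with h | h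
      · exact ⟨0, (eq_of_isAncestor_of_forall_parent_ne h
          fun c => by cases c <;> simp [parent]).symm⟩
      · exact ⟨1, h.symm⟩
    rw [Fintype.card_fin] at hle
    have := pow_pos (by omega : 0 < n) 4
    omega
  · choose v hv hvt using below _ hix rfl
    have := (le_card_of_injective_of_mem_range (hinj hv) fun j => mem_range_ofBranchIndex
      (hvt j)).trans (card_branchIndex_le (hS i))
    nlinarith [pow_le_pow_left₀ zero_le_two hn 4, pow_le_pow_left₀ zero_le_two hn 3]

theorem exists_top (hft : f t = .p) {w : PVert n m k} (hw : (Pgraph n m k).Adj .p w) :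
    ∃ r, f r = w ∧ f (parent r) = .p ∧ ∀ b, f b = w → IsAncestor r b := by
  obtain ⟨u, v, huv, hu, hv⟩ := hf.2.2 hw
  have ht : t ∉ f ⁻¹' {w} := fun h => hw.ne (hft.symm.trans h)
  obtain ⟨r, hr, -, hrB⟩ := exists_top_of_connected (hf.2.1 w) hv ht
  refine ⟨r, hr, ?_, hrB⟩
  have hru : ¬ IsAncestor r u := fun hru => by
    have hrt : ¬ IsAncestor r t := fun h => ht (eq_t_of_isAncestor_t h ▸ hr)
    exact hw.ne ((mem_and_parent_mem_of_connected (hf.2.1 .p) hu hft hru hrt).1.symm.trans hr)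
  rw [← (eq_of_adj_of_isAncestor huv (hrB v hv) hru).2]
  exact hu

theorem star_center_cases (hft : f t = .p) {w : PVert n m k} (hw : (Pgraph n m k).Adj .p w)
    {q : ℕ} (hq : 0 < q) {leaf : Fin q → PVert n m k} (hleaf : Function.Injective leaf)
    (hwleaf : ∀ l, (Pgraph n m k).Adj w (leaf l)) (hleafp : ∀ l, leaf l ≠ .p) :
    (∃ i, f (ti i) = w) ∨ (∃ i, f (ycenter i) = w ∧ f (ti i) = .p ∧ q ≤ n ^ 2) ∨
      ∃ i s, f (scenter i s) = w ∧ f (ti i) = .p ∧ q ≤ s := by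
  obtain ⟨r, hr, hpr, hrB⟩ := hf.exists_top hft hw
  have below : ∀ l, ∃ v, f v = leaf l ∧ IsAncestor r v ∧ v ≠ r := fun l => by
    obtain ⟨v, hv, hrv | rfl⟩ := hf.exists_realizer_below hrB (hwleaf l)
    · exact ⟨v, hv, hrv, fun h => (hwleaf l).ne (hr ▸ h ▸ hv)⟩
    · exact absurd (hv.symm.trans hpr) (hleafp l)
  choose v hv hrv hvr using below
  have hinj : Function.Injective v := fun a b hab => hleaf (by rw [← hv a, ← hv b, hab])
  have hnotleaf : ¬ ∀ c, parent c ≠ r := fun h =>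
    hvr ⟨0, hq⟩ (eq_of_isAncestor_of_forall_parent_ne (hrv _) h)
  cases r with
  | t => exact absurd (hft.symm.trans hr) hw.ne
  | ti i => exact .inl ⟨i, hr⟩
  | ycenter i =>
    refine .inr (.inl ⟨i, hr, hpr, ?_⟩)
    simpa using le_card_of_injective_of_mem_range hinj fun l =>
      mem_range_yleaf_of_isAncestor (hrv l) (hvr l)
  | scenter i s =>
    refine .inr (.inr ⟨i, s, hr, hpr, ?_⟩)
    simpa using le_card_of_injective_of_mem_range hinj fun l =>
      mem_range_sleaf_of_isAncestor (hrv l) (hvr l)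
  | _ => exact absurd (fun c => by cases c <;> simp [parent]) hnotleaf

end IsMinorEmbedding

namespace IsMinorEmbedding

variable {n m k : ℕ} {S : Fin m → Finset ℕ} {f : TVert n m S → PVert n m k}
  (hf : IsMinorEmbedding (Tgraph n m S) (Pgraph n m k) f) (hft : f t = .p) (hn : 2 ≤ n)
  (hS : ∀ i, S i ⊆ Finset.Icc 1 n)
include hf hft hn hS

theorem exists_ti_eq_xcenter (j : Fin (m - k)) : ∃ i, f (ti i) = .xcenter j := by
  have hn3 : n ^ 2 < n ^ 3 := Nat.pow_lt_pow_right (by omega) (by omega)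
  rcases hf.star_center_cases hft (w := .xcenter j) (leaf := .xleaf j) (by simp [Pgraph, PRel])
      (by positivity) (fun _ _ h => (PVert.xleaf.inj h).2) (by simp [Pgraph, PRel]) (by simp)
    with h | ⟨_, -, -, h⟩ | ⟨i, s, -, -, h⟩
  · exact h
  · omega
  · have := (Finset.mem_Icc.mp (hS i s.2)).2
    nlinarith

theorem exists_occupies_ycenter (j : Fin k) : ∃ i, Occupies f i (.ycenter j) := by
  rcases hf.star_center_cases hft (w := .ycenter j) (leaf := .yleaf j) (by simp [Pgraph, PRel])
      (by positivity) (fun _ _ h => (PVert.yleaf.inj h).2) (by simp [Pgraph, PRel]) (by simp)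
    with ⟨i, h⟩ | ⟨i, h, hp, -⟩ | ⟨i, s, -, -, h⟩
  · exact ⟨i, .inl h⟩
  · exact ⟨i, .inr ⟨h, hp⟩⟩
  · have := (Finset.mem_Icc.mp (hS i s.2)).2
    nlinarith

theorem not_occupies_rcenter (u : Fin n) (i : Fin m) : ¬ Occupies f i (.rcenter u) := by
  intro h
  have := card_le_of_occupies (α := Fin (m - k) ⊕ Fin k ⊕ Unit)
    (w := Sum.elim .xcenter (Sum.elim .ycenter fun _ => .rcenter u))
    (by simp [Function.Injective, Sum.forall]) (by simp [Sum.forall])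
    (by simpa [Sum.forall] using ⟨fun j => (hf.exists_ti_eq_xcenter hft hn hS j).imp
      fun _ => .inl, hf.exists_occupies_ycenter hft hn hS, i, h⟩)
  simp only [Fintype.card_sum, Fintype.card_fin, Fintype.card_unit] at this
  omega

theorem exists_scenter_eq_rcenter (u : Fin n) :
    ∃ i s, f (scenter i s) = .rcenter u ∧ f (ti i) = .p ∧ u.val + 1 ≤ s := by
  rcases hf.star_center_cases hft (w := .rcenter u) (leaf := .rleaf u) (by simp [Pgraph, PRel])
      u.val.succ_pos (fun _ _ h => eq_of_heq (PVert.rleaf.inj h).2) (by simp [Pgraph, PRel])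
      (by simp)
    with ⟨i, h⟩ | ⟨i, h, hp, -⟩ | h
  · exact absurd (.inl h) (hf.not_occupies_rcenter hft hn hS u i)
  · exact absurd (.inr ⟨h, hp⟩) (hf.not_occupies_rcenter hft hn hS u i)
  · exact h

theorem exists_finset_card_le :
    ∃ R : Finset (Fin m), R.card ≤ k ∧ ∀ i, f (ti i) = .p → i ∈ R := by
  choose x hx using hf.exists_ti_eq_xcenter hft hn hS
  have hxinj : Function.Injective x := fun a b hab =>
    PVert.xcenter.inj (by rw [← hx a, ← hx b, hab])
  refine ⟨(Finset.univ.image x)ᶜ, ?_, fun i hi => ?_⟩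
  · rw [Finset.card_compl, Finset.card_image_of_injective _ hxinj]
    simp only [Fintype.card_fin, Finset.card_univ]
    omega
  · simp only [Finset.mem_compl, Finset.mem_image, Finset.mem_univ, true_and, not_exists]
    rintro j rfl
    exact nomatch hi.symm.trans (hx j)

end IsMinorEmbedding

theorem stmt_4_general {n m k : ℕ} (hn : 2 ≤ n) (S : Fin m → Finset ℕ)
    (hS : ∀ i, (S i).Nonempty ∧ S i ⊆ Finset.Icc 1 n)
    (hminor : ∃ f : TVert n m S → PVert n m k,
      IsMinorEmbedding (Tgraph n m S) (Pgraph n m k) f) :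
    InclusiveSetCoverYes n S k := by
  obtain ⟨f, hf⟩ := hminor
  have hS' : ∀ i, S i ⊆ Finset.Icc 1 n := fun i => (hS i).2
  have hft := hf.apply_t hn hS'
  choose i s hs hti hle using hf.exists_scenter_eq_rcenter hft hn hS'
  obtain ⟨R, hR, hmemR⟩ := hf.exists_finset_card_le hft hn hS'
  refine inclusiveSetCoverYes_of_injective hS' R hR (fun u => (s u, i u)) (fun u u' h => ?_)
    (fun u => ⟨hmemR _ (hti u), (s u).2⟩) hle
  obtain ⟨hsu, hiu⟩ := Prod.mk.inj h
  apply PVert.rcenter.inj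
  rw [← hs u, ← hs u', TVert.scenter_congr hiu hsu]

/-- If `P` is a minor of `T` (with `n ≥ 2`, all `S_i` nonempty subsets of `{1,…,n}`, and
`k ≤ m`), then the Inclusive Set Cover instance `⟨{1,…,n}, S, k⟩` is a yes-instance. -/
theorem stmt_4 {n m k : ℕ} (hn : 2 ≤ n) (S : Fin m → Finset ℕ)
    (hS : ∀ i, (S i).Nonempty ∧ S i ⊆ Finset.Icc 1 n) (hk : k ≤ m)
    (hminor : ∃ f : TVert n m S → PVert n m k,
      IsMinorEmbedding (Tgraph n m S) (Pgraph n m k) f) :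
    InclusiveSetCoverYes n S k :=
  stmt_4_general hn S hS hminor
end

section
/- Let n ≥ 2, U = {1,…,n}, let S = (S_1,…,S_m) be a family of nonempty subsets of U, and let k ≤ m. Define trees P and T as follows. P has a center vertex p with 3n⁴ pendant leaves; additionally p is adjacent to the centers of stars R_1,…,R_n (where R_i has exactly i leaves), X_1,…,X_{m−k} (each with n³ leaves), and Y_1,…,Y_k (each with n² leaves). T has a center vertex t with 3n⁴ pendant leaves; additionally t is adjacent to vertices t_1,…,t_m, where each t_i has n³ pendant leaves, one neighbour for each s ∈ S_i that is the center of a star with s leaves, and one further neighbour that is the center of a star with n² leaves. Then every minor embedding g of P in T satisfies g(t) = p. -/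
/-!
Suppose `g t ≠ p`. The branch set `g⁻¹(p)` is connected and avoids `t`, so it lies in a single
component of `T - t`. Each of the `3n⁴` leaves of `p` must be realized by a vertex adjacent to
that branch set, and these vertices are distinct; but they all lie in that component or equal
`t`, and every component of `T - t` together with `t` has fewer than `3n⁴` vertices once
`S_i ⊆ [1, n]` and `n ≥ 2`.
-/

open Function

lemma SimpleGraph.Preconnected.apply_eq_of_forall_adj {V β : Type*} {G : SimpleGraph V}
    (hG : G.Preconnected) {f : V → β} (hf : ∀ u v, G.Adj u v → f u = f v) (u v : V) :
    f u = f v := by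
  obtain ⟨w⟩ := hG u v
  induction w with
  | nil => rfl
  | cons h _ ih => exact (hf _ _ h).trans ih

lemma Pgraph_adj_p_pleaf {n m k : ℕ} (j : Fin (3 * n ^ 4)) :
    (Pgraph n m k).Adj .p (.pleaf j) := by
  simp [Pgraph, PRel]

namespace TVert

variable {n m : ℕ} {S : Fin m → Finset ℕ}

/-- The component of `T - t` containing a vertex: the `i`-th subtree below `t_i`, or a
single leaf of `t`; `t` itself gets `none`. -/
def branch : TVert n m S → Option (Fin m ⊕ Fin (3 * n ^ 4))
  | .t => none
  | .tleaf j => some (.inr j)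
  | .ti i | .tileaf i _ | .scenter i _ | .sleaf i _ _ | .ycenter i | .yleaf i _ => some (.inl i)

lemma branch_eq_of_adj {u v : TVert n m S} (h : (Tgraph n m S).Adj u v) (hu : u ≠ .t)
    (hv : v ≠ .t) : u.branch = v.branch := by
  rw [Tgraph, SimpleGraph.fromRel_adj] at h
  obtain ⟨-, h | h⟩ := h <;> cases u <;> cases v <;> simp_all [TRel, branch]

lemma eq_t_or_branch_eq_of_adj {u v : TVert n m S} (h : (Tgraph n m S).Adj u v) (hu : u ≠ .t) :
    v = .t ∨ v.branch = u.branch := by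
  by_cases hv : v = .t
  · exact .inl hv
  · exact .inr (branch_eq_of_adj h hu hv).symm

lemma branch_eq_of_preconnected {A : Set (TVert n m S)}
    (hA : ((Tgraph n m S).induce A).Preconnected) (ht : TVert.t ∉ A) {x y : TVert n m S}
    (hx : x ∈ A) (hy : y ∈ A) : x.branch = y.branch :=
  hA.apply_eq_of_forall_adj (f := fun a : A => a.1.branch)
    (fun a b hab => branch_eq_of_adj hab (ne_of_mem_of_not_mem a.2 ht)
      (ne_of_mem_of_not_mem b.2 ht))
    ⟨x, hx⟩ ⟨y, hy⟩

lemma coe_lt_succ (hS : ∀ i, S i ⊆ Finset.Icc 1 n) {i : Fin m} (s : S i) : (s : ℕ) < n + 1 :=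
  Nat.lt_succ_of_le (Finset.mem_Icc.1 (hS i s.2)).2

/-- Position of a vertex within its component of `T - t`; both `t_i` and `tleaf j` are roots.
Forgetting the component and coding star sizes in `Fin (n + 1)` makes the codomain small. -/
def branchPos (hS : ∀ i, S i ⊆ Finset.Icc 1 n) : TVert n m S →
    Option (Unit ⊕ Fin (n ^ 3) ⊕ Fin (n + 1) × Option (Fin (n + 1)) ⊕ Option (Fin (n ^ 2)))
  | .t => none
  | .tleaf _ | .ti _ => some (.inl ())
  | .tileaf _ a => some (.inr (.inl a))
  | .scenter _ s => some (.inr (.inr (.inl (⟨s, coe_lt_succ hS s⟩, none))))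
  | .sleaf _ s a =>
    some (.inr (.inr (.inl (⟨s, coe_lt_succ hS s⟩, some ⟨a, a.2.trans (coe_lt_succ hS s)⟩))))
  | .ycenter _ => some (.inr (.inr (.inr none)))
  | .yleaf _ a => some (.inr (.inr (.inr (some a))))

lemma branchPos_injOn (hS : ∀ i, S i ⊆ Finset.Icc 1 n)
    (b : Option (Fin m ⊕ Fin (3 * n ^ 4))) :
    Set.InjOn (branchPos hS) {x | x = .t ∨ x.branch = b} := by
  rintro x (rfl | hx) y (rfl | rfl) h
  · rfl
  · cases y <;> simp_all [branchPos]
  · cases x <;> simp_all [branchPos]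
  · cases x <;> cases y <;> simp_all [branchPos, branch]
    case scenter.scenter =>
      subst hx
      exact heq_of_eq (Subtype.ext h)
    case sleaf.sleaf i s a _ s' a' =>
      subst hx
      obtain ⟨s, hs⟩ := s
      obtain ⟨s', hs'⟩ := s'
      obtain ⟨rfl : s = s', ha⟩ := h
      exact ⟨HEq.rfl, heq_of_eq (Fin.ext ha)⟩

lemma card_le_of_forall_mem_branch (hS : ∀ i, S i ⊆ Finset.Icc 1 n) {ι : Type*} [Fintype ι]
    {v : ι → TVert n m S} (hv : Injective v) (b : Option (Fin m ⊕ Fin (3 * n ^ 4)))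
    (hvb : ∀ j, v j = .t ∨ (v j).branch = b) :
    Fintype.card ι ≤ n ^ 3 + n ^ 2 + (n + 1) * (n + 2) + 3 := by
  have h := Fintype.card_le_of_injective (branchPos hS ∘ v)
    fun j j' h => hv (branchPos_injOn hS b (hvb j) (hvb j') h)
  simp only [Fintype.card_option, Fintype.card_sum, Fintype.card_prod, Fintype.card_unit,
    Fintype.card_fin] at h
  linarith

end TVert

theorem stmt_5_general {n m k : ℕ} (hn : 2 ≤ n) (S : Fin m → Finset ℕ)
    (hS : ∀ i, (S i).Nonempty ∧ S i ⊆ Finset.Icc 1 n)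
    (g : TVert n m S → PVert n m k)
    (hg : IsMinorEmbedding (Tgraph n m S) (Pgraph n m k) g) :
    g TVert.t = PVert.p := by
  obtain ⟨-, hconn, hedge⟩ := hg
  by_contra hgt
  choose u v huv hu hv using fun j : Fin (3 * n ^ 4) => hedge (Pgraph_adj_p_pleaf j)
  have hv_inj : Injective v := fun j j' h => PVert.pleaf.inj ((hv j).symm.trans (h ▸ hv j'))
  have hu_ne : ∀ j, u j ≠ .t := fun j h => hgt (h ▸ hu j)
  obtain ⟨j₀⟩ : Nonempty (Fin (3 * n ^ 4)) := ⟨⟨0, by positivity⟩⟩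
  have hub : ∀ j, (u j).branch = (u j₀).branch := fun j =>
    TVert.branch_eq_of_preconnected (hconn .p).preconnected hgt (hu j) (hu j₀)
  have hv_mem : ∀ j, v j = .t ∨ (v j).branch = (u j₀).branch := fun j =>
    hub j ▸ TVert.eq_t_or_branch_eq_of_adj (huv j) (hu_ne j)
  have hcard := TVert.card_le_of_forall_mem_branch (fun i => (hS i).2) hv_inj _ hv_mem
  rw [Fintype.card_fin] at hcard
  nlinarith [Nat.mul_le_mul_right (n ^ 3) hn, Nat.mul_le_mul_right (n ^ 2) hn,
    Nat.mul_le_mul_right n hn]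

/-- With `n ≥ 2`, all `S_i` nonempty subsets of `{1,…,n}`, and `k ≤ m`, every minor
embedding `g` of `P` in `T` satisfies `g(t) = p`. -/
theorem stmt_5 {n m k : ℕ} (hn : 2 ≤ n) (S : Fin m → Finset ℕ)
    (hS : ∀ i, (S i).Nonempty ∧ S i ⊆ Finset.Icc 1 n) (hk : k ≤ m)
    (g : TVert n m S → PVert n m k)
    (hg : IsMinorEmbedding (Tgraph n m S) (Pgraph n m k) g) :
    g TVert.t = PVert.p :=
  stmt_5_general hn S hS g hg
end

section
/- Let (U, ≤) be a finite partially ordered set with U = {u_0,…,u_{n−1}}. For a, b ∈ U, the natural embedding from OCat(b) to OCat(a) exists if and only if a ≤ b; moreover, when it exists, it is a minor embedding of OCat(a) in OCat(b). -/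
/-- Vertices of the order caterpillar `OCat(a)`: spine vertices `v_0ᵃ,…,v_{n+1}ᵃ`
(`Sum.inl`) and a pendant leaf `l_iᵃ` for each `i < n` with `u_i ≤ a` (`Sum.inr`). -/
def OCatVert {α : Type*} [PartialOrder α] (n : ℕ) (u : Fin n → α) (a : α) : Type _ :=
  Fin (n + 2) ⊕ {i : Fin n // u i ≤ a}

/-- Base adjacency of `OCat(a)`: consecutive spine vertices are adjacent, and the leaf
`l_iᵃ` is attached to the spine vertex `v_iᵃ`. -/
def OCatRel {α : Type*} [PartialOrder α] (n : ℕ) (u : Fin n → α) (a : α) :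
    OCatVert n u a → OCatVert n u a → Prop
  | .inl i, .inl j => (j : ℕ) = (i : ℕ) + 1
  | .inl i, .inr j => (i : ℕ) = (j.1 : ℕ)
  | _, _ => False

/-- The order caterpillar `OCat(a)`. -/
def OCat {α : Type*} [PartialOrder α] (n : ℕ) (u : Fin n → α) (a : α) :
    SimpleGraph (OCatVert n u a) :=
  SimpleGraph.fromRel (OCatRel n u a)

open Classical in
/-- The natural embedding from `OCat(b)` to `OCat(a)`: spine vertices map to spine vertices,
and `l_iᵇ` maps to `l_iᵃ` when `u_i ≤ a` and to the spine vertex `v_iᵃ` otherwise. -/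
noncomputable def naturalEmb {α : Type*} [PartialOrder α] (n : ℕ) (u : Fin n → α) (a b : α) :
    OCatVert n u b → OCatVert n u a
  | .inl i => .inl i
  | .inr j => if h : u j.1 ≤ a then .inr ⟨j.1, h⟩ else .inl (Fin.castLE (by omega) j.1)

/-
The spine of `OCat(b)` is mapped identically onto the spine of `OCat(a)`, and every leaf of
`OCat(b)` is either kept or contracted into its spine neighbour. Each fibre of the natural
embedding is therefore a star centred at a vertex of the copy of `OCat(a)` inside `OCat(b)`,
hence connected, and that copy realises every edge of `OCat(a)`.
-/

theorem Function.Surjective.forall_le_imp_le_iff {ι α : Type*} [Preorder α] {u : ι → α}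
    (hu : Function.Surjective u) (a b : α) : (∀ i, u i ≤ a → u i ≤ b) ↔ a ≤ b := by
  refine ⟨fun h => ?_, fun h i hi => hi.trans h⟩
  obtain ⟨i, rfl⟩ := hu a
  exact h i le_rfl

namespace SimpleGraph

variable {V W : Type*} {T : SimpleGraph V} {P : SimpleGraph W}

theorem induce_connected_of_forall_eq_or_adj {s : Set V} {c : V} (hc : c ∈ s)
    (hstar : ∀ x ∈ s, x = c ∨ T.Adj c x) : (T.induce s).Connected := by
  have : Nonempty s := ⟨⟨c, hc⟩⟩
  have reach_center : ∀ x : s, (T.induce s).Reachable ⟨c, hc⟩ x := by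
    rintro ⟨x, hx⟩
    rcases hstar x hx with rfl | hadj
    · rfl
    · exact Adj.reachable (by simpa using hadj)
  exact ⟨fun x y => (reach_center x).symm.trans (reach_center y)⟩

theorem isMinorEmbedding_of_leftInverse {f : V → W} (g : P →g T)
    (hfg : Function.LeftInverse f g) (hfib : ∀ w, (T.induce (f ⁻¹' {w})).Connected) :
    IsMinorEmbedding T P f :=
  ⟨hfg.surjective, hfib, fun v w hvw => ⟨g v, g w, g.map_adj hvw, hfg v, hfg w⟩⟩

end SimpleGraph

namespace OCat

variable {α : Type*} [PartialOrder α] {n : ℕ} {u : Fin n → α} {a b : α}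

theorem adj_spine_leaf (j : {i : Fin n // u i ≤ a}) :
    (OCat n u a).Adj (.inl (Fin.castLE (by omega) j.1)) (.inr j) :=
  (SimpleGraph.fromRel_adj _ _ _).mpr ⟨Sum.inl_ne_inr, Or.inl rfl⟩

theorem naturalEmb_inr_of_le (j : {i : Fin n // u i ≤ b}) (h : u j.1 ≤ a) :
    naturalEmb n u a b (.inr j) = .inr ⟨j.1, h⟩ :=
  dif_pos h

theorem naturalEmb_inr_of_not_le (j : {i : Fin n // u i ≤ b}) (h : ¬u j.1 ≤ a) :
    naturalEmb n u a b (.inr j) = .inl (Fin.castLE (by omega) j.1) :=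
  dif_neg h

def inclusion (hab : ∀ i, u i ≤ a → u i ≤ b) : OCat n u a →g OCat n u b where
  toFun
    | .inl i => .inl i
    | .inr j => .inr ⟨j.1, hab j.1 j.2⟩
  map_rel' := by
    rintro (i | ⟨i, hi⟩) (j | ⟨j, hj⟩) ⟨hne, hrel⟩ <;> exact ⟨by rintro ⟨⟩ <;> exact hne rfl, hrel⟩

variable (hab : ∀ i, u i ≤ a → u i ≤ b)
include hab

theorem naturalEmb_inclusion (x : OCatVert n u a) : naturalEmb n u a b (inclusion hab x) = x := by
  rcases x with i | ⟨j, hj⟩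
  · rfl
  · exact naturalEmb_inr_of_le _ hj

theorem eq_or_adj_inclusion_naturalEmb (x : OCatVert n u b) :
    x = inclusion hab (naturalEmb n u a b x) ∨
      (OCat n u b).Adj (inclusion hab (naturalEmb n u a b x)) x := by
  rcases x with i | ⟨j, hj⟩
  · exact Or.inl rfl
  by_cases hja : u j ≤ a
  · rw [naturalEmb_inr_of_le ⟨j, hj⟩ hja]
    exact Or.inl rfl
  · rw [naturalEmb_inr_of_not_le ⟨j, hj⟩ hja]
    exact Or.inr (adj_spine_leaf ⟨j, hj⟩)

theorem naturalEmb_isMinorEmbedding :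
    IsMinorEmbedding (OCat n u b) (OCat n u a) (naturalEmb n u a b) := by
  refine SimpleGraph.isMinorEmbedding_of_leftInverse (inclusion hab)
    (naturalEmb_inclusion hab) fun w => ?_
  refine SimpleGraph.induce_connected_of_forall_eq_or_adj (c := inclusion hab w)
    (naturalEmb_inclusion hab w) fun x hx => ?_
  rw [Set.mem_preimage, Set.mem_singleton_iff] at hx
  simpa [hx, eq_comm] using eq_or_adj_inclusion_naturalEmb hab x

end OCat

theorem stmt_7_general {α : Type*} [PartialOrder α] (n : ℕ) (u : Fin n → α)
    (hu : Function.Surjective u) (a b : α) :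
    ((∀ i : Fin n, u i ≤ a → u i ≤ b) ↔ a ≤ b) ∧
    ((∀ i : Fin n, u i ≤ a → u i ≤ b) →
      IsMinorEmbedding (OCat n u b) (OCat n u a) (naturalEmb n u a b)) :=
  ⟨hu.forall_le_imp_le_iff a b, OCat.naturalEmb_isMinorEmbedding⟩

/-- For a finite poset `U = {u_0,…,u_{n−1}}` and `a, b ∈ U`: the natural embedding from
`OCat(b)` to `OCat(a)` exists (i.e. `u_i ≤ a` implies `u_i ≤ b` for all `i`) if and only if
`a ≤ b`; moreover, when it exists, it is a minor embedding of `OCat(a)` in `OCat(b)`. -/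
theorem stmt_7 {α : Type*} [PartialOrder α] [Fintype α] (n : ℕ) (u : Fin n → α)
    (hu : Function.Surjective u) (a b : α) :
    ((∀ i : Fin n, u i ≤ a → u i ≤ b) ↔ a ≤ b) ∧
    ((∀ i : Fin n, u i ≤ a → u i ≤ b) →
      IsMinorEmbedding (OCat n u b) (OCat n u a) (naturalEmb n u a b)) :=
  stmt_7_general n u hu a b
end

section
/- Let φ be a CNF formula with variables v_1,…,v_n and clauses C_1,…,C_m, each clause containing at most three literals, such that each variable v_i appears exactly twice as a positive literal (in the clauses with indices p₁^i and p₂^i) and exactly once as a negative literal (in the clause with index n^i). Let U = (ℤ ∪ {−∞})³ ordered componentwise, where −∞ is less than every integer. Define x_i = ((i, p₁^i, −p₁^i), (−i, p₂^i, −p₂^i)) and x'_i = ((i, n^i, −n^i), (−i, −∞, −∞)), X = {x_i, x'_i : 1 ≤ i ≤ n}; y_i = ((i, −∞, −∞), (−i, −∞, −∞)) and Y = {y_i : 1 ≤ i ≤ n}; z_j = (−∞, j, −j) and Z = {z_j : 1 ≤ j ≤ m}. If φ is satisfiable, then ⟨(U, ≼), X, (Y, Z)⟩ is a yes-instance of Inclusive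 Poset Pair Cover. -/
/-- The ground poset `U = (ℤ ∪ {−∞})³`, ordered componentwise (`⊥` plays the role of `−∞`). -/
abbrev UU : Type := WithBot ℤ × WithBot ℤ × WithBot ℤ

/-- Inclusive Poset Pair Cover: the instance `⟨(β,≼), X, (Y,Z)⟩` is a yes-instance if there
are injections `f : Y → X` and `g : Z → X × {1,2}` such that (i) no value of `f` occurs as the
`X`-component of a value of `g`, (ii) `f (y₁,y₂) = (x₁,x₂)` implies `y₁ ≼ x₁ ∧ y₂ ≼ x₂` or
`y₂ ≼ x₁ ∧ y₁ ≼ x₂`, and (iii) `g z = ((x₁,x₂), i)` implies `z ≼ xᵢ`. -/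
def IPPCYes {β : Type*} [PartialOrder β] (X Y : Finset (β × β)) (Z : Finset β) : Prop :=
  ∃ (f : {y // y ∈ Y} → {x // x ∈ X}) (g : {z // z ∈ Z} → {x // x ∈ X} × Fin 2),
    Function.Injective f ∧ Function.Injective g ∧
    (∀ y z, f y ≠ (g z).1) ∧
    (∀ y : {y // y ∈ Y}, (y.1.1 ≤ (f y).1.1 ∧ y.1.2 ≤ (f y).1.2) ∨
          (y.1.2 ≤ (f y).1.1 ∧ y.1.1 ≤ (f y).1.2)) ∧
    (∀ z : {z // z ∈ Z}, z.1 ≤ (if (g z).2 = 0 then (g z).1.1.1 else (g z).1.1.2))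

/-- The integer `c+1` (1-based index of `c : Fin _`) as an element of `ℤ ∪ {−∞}`. -/
def ip (c : ℕ) : WithBot ℤ := (((c : ℤ) + 1 : ℤ) : WithBot ℤ)

/-- The integer `−(c+1)` as an element of `ℤ ∪ {−∞}`. -/
def im (c : ℕ) : WithBot ℤ := ((-((c : ℤ) + 1) : ℤ) : WithBot ℤ)

/-- `x_i = ((i, p₁ⁱ, −p₁ⁱ), (−i, p₂ⁱ, −p₂ⁱ))` (1-based indices). -/
def xElt {n m : ℕ} (p1 p2 : Fin n → Fin m) (i : Fin n) : UU × UU :=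
  ((ip i.val, ip (p1 i).val, im (p1 i).val), (im i.val, ip (p2 i).val, im (p2 i).val))

/-- `x'_i = ((i, nⁱ, −nⁱ), (−i, −∞, −∞))` (1-based indices). -/
def xElt' {n m : ℕ} (nn : Fin n → Fin m) (i : Fin n) : UU × UU :=
  ((ip i.val, ip (nn i).val, im (nn i).val), (im i.val, ⊥, ⊥))

/-- `y_i = ((i, −∞, −∞), (−i, −∞, −∞))`. -/
def yElt {n : ℕ} (i : Fin n) : UU × UU :=
  ((ip i.val, ⊥, ⊥), (im i.val, ⊥, ⊥))

/-- `z_j = (−∞, j, −j)`. -/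
def zElt {m : ℕ} (j : Fin m) : UU :=
  (⊥, ip j.val, im j.val)

/-- `X = {x_i, x'_i : 1 ≤ i ≤ n}`. -/
def Xfam {n m : ℕ} (p1 p2 nn : Fin n → Fin m) : Finset (UU × UU) :=
  Finset.univ.image (xElt p1 p2) ∪ Finset.univ.image (xElt' nn)

/-- `Y = {y_i : 1 ≤ i ≤ n}`. -/
def Yfam (n : ℕ) : Finset (UU × UU) := Finset.univ.image (yElt (n := n))

/-- `Z = {z_j : 1 ≤ j ≤ m}`. -/
def Zfam (m : ℕ) : Finset UU := Finset.univ.image (zElt (m := m))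
lemma ip_inj : Function.Injective ip := by
  intro a b h
  simp only [ip, WithBot.coe_inj] at h
  omega

lemma ip_ne_bot (c : ℕ) : ip c ≠ ⊥ := by simp [ip]

lemma xElt_inj {n m : ℕ} (p1 p2 : Fin n → Fin m) :
    Function.Injective (xElt p1 p2) := by
  intro a b h
  have h1 : ip a.val = ip b.val := congrArg (fun p => p.1.1) h
  exact Fin.ext (ip_inj h1)

lemma xElt'_inj {n m : ℕ} (nn : Fin n → Fin m) :
    Function.Injective (xElt' nn) := by
  intro a b h
  have h1 : ip a.val = ip b.val := congrArg (fun p => p.1.1) h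
  exact Fin.ext (ip_inj h1)

lemma xElt_ne_xElt' {n m : ℕ} (p1 p2 nn : Fin n → Fin m) (i i' : Fin n) :
    xElt p1 p2 i ≠ xElt' nn i' := by
  intro h
  have h1 : ip (p2 i).val = (⊥ : WithBot ℤ) := congrArg (fun p => p.2.2.1) h
  exact ip_ne_bot _ h1

/-- Let `C` be a CNF formula (clauses of at most three literals) in which each variable `i`
occurs positively exactly in clauses `p₁ i` and `p₂ i` (distinct) and negatively exactly in
clause `nn i`. If the formula is satisfiable, then `⟨(U,≼), X, (Y,Z)⟩` is a yes-instance of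
Inclusive Poset Pair Cover. -/
theorem stmt_8 {n m : ℕ} (C : Fin m → Finset (Bool × Fin n))
    (hsize : ∀ j, (C j).card ≤ 3)
    (p1 p2 nn : Fin n → Fin m)
    (hp12 : ∀ i, p1 i ≠ p2 i)
    (hpos : ∀ i j, (true, i) ∈ C j ↔ (j = p1 i ∨ j = p2 i))
    (hneg : ∀ i j, (false, i) ∈ C j ↔ j = nn i)
    (hsat : ∃ σ : Fin n → Bool, ∀ j, ∃ l ∈ C j, σ l.2 = l.1) :
    IPPCYes (Xfam p1 p2 nn) (Yfam n) (Zfam m) := by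
  classical
  obtain ⟨σ, hσ⟩ := hsat
  choose l hl hσl using hσ
  have hmemx : ∀ i, xElt p1 p2 i ∈ Xfam p1 p2 nn := fun i =>
    Finset.mem_union_left _ (Finset.mem_image_of_mem _ (Finset.mem_univ i))
  have hmemx' : ∀ i, xElt' nn i ∈ Xfam p1 p2 nn := fun i =>
    Finset.mem_union_right _ (Finset.mem_image_of_mem _ (Finset.mem_univ i))
  -- recover indices from subtype elements
  have hy : ∀ y : {y // y ∈ Yfam n}, ∃ i : Fin n, yElt i = y.1 := by
    intro y
    obtain ⟨i, -, hi⟩ := Finset.mem_image.mp y.2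
    exact ⟨i, hi⟩
  choose iY hiY using hy
  have hz : ∀ z : {z // z ∈ Zfam m}, ∃ j : Fin m, zElt j = z.1 := by
    intro z
    obtain ⟨j, -, hj⟩ := Finset.mem_image.mp z.2
    exact ⟨j, hj⟩
  choose iZ hiZ using hz
  have hiYinj : Function.Injective iY := by
    intro a b h
    apply Subtype.ext
    rw [← hiY a, ← hiY b, h]
  have hiZinj : Function.Injective iZ := by
    intro a b h
    apply Subtype.ext
    rw [← hiZ a, ← hiZ b, h]
  -- the functions on indices
  set F : Fin n → {x // x ∈ Xfam p1 p2 nn} := fun i =>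
    if σ i then ⟨xElt' nn i, hmemx' i⟩ else ⟨xElt p1 p2 i, hmemx i⟩ with hF
  set G : Fin m → {x // x ∈ Xfam p1 p2 nn} × Fin 2 := fun j =>
    if (l j).1 = true then
      (⟨xElt p1 p2 (l j).2, hmemx _⟩, if j = p1 (l j).2 then 0 else 1)
    else (⟨xElt' nn (l j).2, hmemx' _⟩, 0) with hG
  -- positive literal facts
  have hposj : ∀ j, (l j).1 = true → j = p1 (l j).2 ∨ j = p2 (l j).2 := by
    intro j hj
    have : (true, (l j).2) ∈ C j := by
      have := hl j
      rwa [show l j = (true, (l j).2) by rw [← hj]] at this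
    exact (hpos _ _).mp this
  have hnegj : ∀ j, (l j).1 = false → j = nn (l j).2 := by
    intro j hj
    have : (false, (l j).2) ∈ C j := by
      have := hl j
      rwa [show l j = (false, (l j).2) by rw [← hj]] at this
    exact (hneg _ _).mp this
  have hFinj : Function.Injective F := by
    intro a b h
    have h' := congrArg Subtype.val h
    simp only [hF] at h'
    by_cases ha : σ a <;> by_cases hb : σ b <;> simp [ha, hb] at h'
    · exact xElt'_inj nn h'
    · exact absurd h'.symm (xElt_ne_xElt' p1 p2 nn b a)
    · exact absurd h' (xElt_ne_xElt' p1 p2 nn a b)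
    · exact xElt_inj p1 p2 h'
  have hGinj : Function.Injective G := by
    intro a b h
    have h1 : ((G a).1 : UU × UU) = ((G b).1 : UU × UU) :=
      congrArg (fun p => (p.1 : UU × UU)) h
    have h2 : (G a).2 = (G b).2 := congrArg Prod.snd h
    by_cases ha : (l a).1 = true
    · by_cases hb : (l b).1 = true
      · simp only [hG, ha, hb, if_true] at h1 h2
        have hi : (l a).2 = (l b).2 := xElt_inj p1 p2 h1
        by_cases hpa : a = p1 (l a).2
        · by_cases hpb : b = p1 (l b).2
          · rw [hpa, hpb, hi]
          · rw [if_pos hpa, if_neg hpb] at h2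
            exact absurd h2 (by decide)
        · by_cases hpb : b = p1 (l b).2
          · rw [if_neg hpa, if_pos hpb] at h2
            exact absurd h2 (by decide)
          · have ha2 := (hposj a ha).resolve_left hpa
            have hb2 := (hposj b hb).resolve_left hpb
            rw [ha2, hb2, hi]
      · simp only [hG, ha, hb, if_true, if_false] at h1
        exact absurd h1 (xElt_ne_xElt' p1 p2 nn _ _)
    · by_cases hb : (l b).1 = true
      · simp only [hG, ha, hb, if_true, if_false] at h1
        exact absurd h1.symm (xElt_ne_xElt' p1 p2 nn _ _)
      · simp only [hG, ha, hb, if_false] at h1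
        have hi : (l a).2 = (l b).2 := xElt'_inj nn h1
        rw [hnegj a (Bool.eq_false_iff.mpr ha), hnegj b (Bool.eq_false_iff.mpr hb), hi]
  refine ⟨fun y => F (iY y), fun z => G (iZ z),
    fun a b h => hiYinj (hFinj h), fun a b h => hiZinj (hGinj h), ?_, ?_, ?_⟩
  · intro y z h
    have h' : ((F (iY y)) : UU × UU) = (((G (iZ z)).1) : UU × UU) :=
      congrArg Subtype.val h
    set i0 := iY y
    set j := iZ z
    by_cases h0 : σ i0
    · by_cases hjt : (l j).1 = true
      · simp only [hF, hG, h0, hjt, if_true] at h'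
        exact xElt_ne_xElt' p1 p2 nn _ _ h'.symm
      · simp only [hF, hG, h0, hjt, if_true, if_false] at h'
        have hii : i0 = (l j).2 := xElt'_inj nn h'
        have hs := hσl j
        rw [← hii, h0] at hs
        exact hjt hs.symm
    · by_cases hjt : (l j).1 = true
      · simp only [hF, hG, h0, hjt, if_true, if_false] at h'
        have hii : i0 = (l j).2 := xElt_inj p1 p2 h'
        have hs := hσl j
        rw [← hii, hjt] at hs
        exact h0 hs
      · simp only [hF, hG, h0, hjt, if_false] at h'
        exact xElt_ne_xElt' p1 p2 nn _ _ h'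
  · intro y
    left
    have hyv : y.1 = yElt (iY y) := (hiY y).symm
    set i := iY y
    beta_reduce
    rw [hyv]
    by_cases h0 : σ i
    · have hFi : F i = ⟨xElt' nn i, hmemx' i⟩ := by
        simp only [hF]; rw [if_pos h0]
      rw [hFi]
      exact ⟨⟨le_refl _, bot_le, bot_le⟩, ⟨le_refl _, bot_le, bot_le⟩⟩
    · have hFi : F i = ⟨xElt p1 p2 i, hmemx i⟩ := by
        simp only [hF]; rw [if_neg h0]
      rw [hFi]
      exact ⟨⟨le_refl _, bot_le, bot_le⟩, ⟨le_refl _, bot_le, bot_le⟩⟩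
  · intro z
    have hzv : z.1 = zElt (iZ z) := (hiZ z).symm
    set j := iZ z
    beta_reduce
    rw [hzv]
    by_cases hj : (l j).1 = true
    · by_cases hpa : j = p1 (l j).2
      · have hGj : G j = (⟨xElt p1 p2 (l j).2, hmemx _⟩, 0) := by
          simp only [hG]; rw [if_pos hj, if_pos hpa]
        rw [hGj]
        simp only [zElt, xElt, Prod.le_def, if_pos rfl]
        refine ⟨bot_le, ?_, ?_⟩ <;> rw [← hpa] <;> simp
      · have h2 := (hposj j hj).resolve_left hpa
        have hGj : G j = (⟨xElt p1 p2 (l j).2, hmemx _⟩, 1) := by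
          simp only [hG]; rw [if_pos hj, if_neg hpa]
        rw [hGj]
        simp only [zElt, xElt, Prod.le_def, if_neg (by decide : (1 : Fin 2) ≠ 0)]
        refine ⟨bot_le, ?_, ?_⟩ <;> rw [← h2] <;> simp
    · have h2 := hnegj j (Bool.eq_false_iff.mpr hj)
      have hGj : G j = (⟨xElt' nn (l j).2, hmemx' _⟩, 0) := by
        simp only [hG]; rw [if_neg hj]
      rw [hGj]
      simp only [zElt, xElt', Prod.le_def, if_pos rfl]
      refine ⟨bot_le, ?_, ?_⟩ <;> rw [← h2] <;> simp
end

section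
/- Let (U, ≼) be a finite partially ordered set with U = {u_0,…,u_{n−1}}, let X ⊆ U², Y ⊆ U², Z ⊆ U be nonempty with |X| ≥ 2 and |Y| ≥ 2. For each pair x = (x₁, x₂) ∈ X let T_x be the tree consisting of a root r_x adjacent to the vertex v_0 of a copy of OCat(x₁) and to the vertex v_0 of a copy of OCat(x₂), and let T be obtained from the disjoint union of the trees T_x (x ∈ X) by adding a vertex r_T adjacent to every r_x. Similarly, for each y = (y₁, y₂) ∈ Y let Q_y consist of a root r_y adjacent to the vertex v_0 of a copy of OCat(y₁) and to the vertex v_0 of a copy of OCat(y₂); for each z ∈ Z let R_z be a copy of OCat(z); and let P be obtained from the disjoint union of the Q_y (y ∈ Y) and the R_z (z ∈ Z) by adding a vertex r_P adjacent to every r_y and to the vertex v_0^z of every R_z. Then every minor embedding φ of P in T satisfies φ(r_T) = r_P. -/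
/-- Vertices of the tree `T_x` (for `x = (x₁,x₂)`): a root `r_x` (`Sum.inl`), a copy of
`OCat(x₁)` and a copy of `OCat(x₂)`. -/
def PairTreeVert {α : Type*} [PartialOrder α] (n : ℕ) (u : Fin n → α) (x : α × α) : Type _ :=
  Unit ⊕ (OCatVert n u x.1 ⊕ OCatVert n u x.2)

/-- Base adjacency of `T_x`: the root is adjacent to the vertex `v_0` of each of the two
order caterpillars, whose internal edges are kept. -/
def PairTreeRel {α : Type*} [PartialOrder α] (n : ℕ) (u : Fin n → α) (x : α × α) :
    PairTreeVert n u x → PairTreeVert n u x → Prop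
  | .inl _, .inr (.inl (.inl i)) => (i : ℕ) = 0
  | .inl _, .inr (.inr (.inl i)) => (i : ℕ) = 0
  | .inr (.inl w), .inr (.inl w') => OCatRel n u x.1 w w'
  | .inr (.inr w), .inr (.inr w') => OCatRel n u x.2 w w'
  | _, _ => False

/-- Vertices of `T`: the root `r_T` together with the disjoint union of the trees `T_x`,
`x ∈ X`. -/
def BigTVert {α : Type*} [PartialOrder α] (n : ℕ) (u : Fin n → α) (X : Finset (α × α)) :
    Type _ :=
  Unit ⊕ (Σ x : {x : α × α // x ∈ X}, PairTreeVert n u x.1)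

/-- Base adjacency of `T`: `r_T` is adjacent to every root `r_x`, and the edges inside each
`T_x` are kept. -/
def BigTRel {α : Type*} [PartialOrder α] (n : ℕ) (u : Fin n → α) (X : Finset (α × α)) :
    BigTVert n u X → BigTVert n u X → Prop
  | .inl _, .inr ⟨_, .inl _⟩ => True
  | .inr a, .inr b => ∃ h : a.1 = b.1, PairTreeRel n u b.1.1 (h ▸ a.2) b.2
  | _, _ => False

/-- The tree `T`. -/
def BigT {α : Type*} [PartialOrder α] (n : ℕ) (u : Fin n → α) (X : Finset (α × α)) :
    SimpleGraph (BigTVert n u X) :=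
  SimpleGraph.fromRel (BigTRel n u X)

/-- Vertices of `P`: the root `r_P` together with the disjoint union of the trees `Q_y`
(`y ∈ Y`) and the order caterpillars `R_z` (`z ∈ Z`). -/
def BigPVert {α : Type*} [PartialOrder α] (n : ℕ) (u : Fin n → α) (Y : Finset (α × α))
    (Z : Finset α) : Type _ :=
  Unit ⊕ ((Σ y : {y : α × α // y ∈ Y}, PairTreeVert n u y.1) ⊕
          (Σ z : {z : α // z ∈ Z}, OCatVert n u z.1))

/-- Base adjacency of `P`: `r_P` is adjacent to every root `r_y` and to the spine vertex
`v_0` of every `R_z`; the edges inside each `Q_y` and each `R_z` are kept. -/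
def BigPRel {α : Type*} [PartialOrder α] (n : ℕ) (u : Fin n → α) (Y : Finset (α × α))
    (Z : Finset α) : BigPVert n u Y Z → BigPVert n u Y Z → Prop
  | .inl _, .inr (.inl ⟨_, .inl _⟩) => True
  | .inl _, .inr (.inr ⟨_, .inl i⟩) => (i : ℕ) = 0
  | .inr (.inl a), .inr (.inl b) => ∃ h : a.1 = b.1, PairTreeRel n u b.1.1 (h ▸ a.2) b.2
  | .inr (.inr a), .inr (.inr b) => ∃ h : a.1 = b.1, OCatRel n u b.1.1 (h ▸ a.2) b.2
  | _, _ => False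

/-- The tree `P`. -/
def BigP {α : Type*} [PartialOrder α] (n : ℕ) (u : Fin n → α) (Y : Finset (α × α))
    (Z : Finset α) : SimpleGraph (BigPVert n u Y Z) :=
  SimpleGraph.fromRel (BigPRel n u Y Z)

/-!
Deleting `r_T` from `T` leaves a disjoint union of caterpillars: each `T_x` is the path
`v_{n+1}^{x₁} … v_0^{x₁} r_x v_0^{x₂} … v_{n+1}^{x₂}` with pendant leaves. If `φ(r_T) ≠ r_P`,
some root `r_y` of `P` is the centre of a subdivided claw (legs through the two caterpillars of
`Q_y` and through `r_P`) whose centre and middle branch sets avoid `r_T`. In a caterpillar the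
spine positions met by a connected branch set form an interval, and each middle branch set
contains the spine vertex just below or just above it; with three legs two middle branch sets
would share a vertex.
-/

namespace SimpleGraph

variable {V : Type*} {G : SimpleGraph V}

lemma Walk.exists_mem_support_eq_of_le_of_le (f : V → ℤ)
    (hf : ∀ ⦃a b⦄, G.Adj a b → |f a - f b| ≤ 1) {a b : V} (p : G.Walk a b) {m : ℤ}
    (ham : f a ≤ m) (hmb : m ≤ f b) : ∃ w ∈ p.support, f w = m := by
  induction p with
  | nil => exact ⟨_, Walk.start_mem_support _, le_antisymm ham hmb⟩
  | @cons a c b h q ih =>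
    by_cases hcm : f c ≤ m
    · obtain ⟨w, hw, rfl⟩ := ih hcm hmb
      exact ⟨w, List.mem_cons_of_mem _ hw, rfl⟩
    · have := abs_le.mp (hf h)
      exact ⟨a, by simp, by omega⟩

lemma Connected.ordConnected_range (hG : G.Connected) (f : V → ℤ)
    (hf : ∀ ⦃a b⦄, G.Adj a b → |f a - f b| ≤ 1) : (Set.range f).OrdConnected := by
  refine ⟨?_⟩
  rintro _ ⟨a, rfl⟩ _ ⟨b, rfl⟩ m ⟨ham, hmb⟩
  obtain ⟨p⟩ := hG a b
  obtain ⟨w, -, rfl⟩ := p.exists_mem_support_eq_of_le_of_le f hf ham hmb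
  exact ⟨w, rfl⟩

lemma Connected.apply_eq_of_adj {β : Type*} (hG : G.Connected) (f : V → β)
    (hf : ∀ ⦃a b⦄, G.Adj a b → f a = f b) (a b : V) : f a = f b := by
  obtain ⟨p⟩ := hG a b
  induction p with
  | nil => rfl
  | cons h _ ih => exact (hf h).trans ih

lemma Connected.exists_adj_of_ne (hG : G.Connected) {a b : V} (hab : a ≠ b) :
    ∃ c, G.Adj a c := by
  obtain ⟨p⟩ := hG a b
  exact ⟨p.snd, p.adj_snd (Walk.not_nil_of_ne hab)⟩

end SimpleGraph

lemma Set.OrdConnected.eq_of_sub_eq_sub {I : Set ℤ} (hI : I.OrdConnected) {q q' m m' : ℤ}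
    (hq : q ∉ I) (hq' : q' ∉ I) (hm : m ∈ I) (hm' : m' ∈ I) (h : q - m = q' - m')
    (h1 : |q - m| ≤ 1) : q = q' := by
  have key : ∀ {q q' m m' : ℤ}, q ∉ I → q' ∉ I → m ∈ I → m' ∈ I → q - m = q' - m' →
      |q - m| ≤ 1 → ¬ q < q' := by
    intro q q' m m' hq hq' hm hm' h h1 hlt
    have := abs_le.mp h1
    rcases le_or_gt 0 (q - m) with hd | hd
    · exact hq (hI.out hm hm' ⟨by omega, by omega⟩)
    · exact hq' (hI.out hm hm' ⟨by omega, by omega⟩)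
  rcases lt_trichotomy q q' with hlt | heq | hgt
  · exact (key hq hq' hm hm' h h1 hlt).elim
  · exact heq
  · exact (key hq' hq hm' hm h.symm (h ▸ h1) hgt).elim

/-- Coordinates exhibiting `G` minus the vertex `r` as a disjoint union of caterpillars: `comp`
names the component and `pos` the position along its spine; the spine vertices of a component
are determined by their position, and each leaf hangs off the spine vertex at its position. -/
structure CaterpillarCoords {V : Type*} (G : SimpleGraph V) (r : V) (C : Type*) where
  IsLeaf : V → Prop
  comp : V → C
  pos : V → ℤ
  comp_eq_of_adj : ∀ ⦃a b⦄, G.Adj a b → a ≠ r → b ≠ r → comp a = comp b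
  abs_pos_sub_le_one : ∀ ⦃a b⦄, G.Adj a b → a ≠ r → b ≠ r → |pos a - pos b| ≤ 1
  eq_of_not_isLeaf : ∀ ⦃a b⦄, a ≠ r → b ≠ r → ¬ IsLeaf a → ¬ IsLeaf b →
    comp a = comp b → pos a = pos b → a = b
  spine_of_adj_isLeaf : ∀ ⦃a b⦄, G.Adj a b → IsLeaf b →
    a ≠ r ∧ ¬ IsLeaf a ∧ comp a = comp b ∧ pos a = pos b

namespace CaterpillarCoords

variable {V W C : Type*} {G : SimpleGraph V} {r : V}

lemma eq_of_adj_isLeaf (cc : CaterpillarCoords G r C) {s t t' : V} (ht : G.Adj t s)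
    (ht' : G.Adj t' s) (hs : cc.IsLeaf s) : t = t' := by
  obtain ⟨htr, htl, htc, htp⟩ := cc.spine_of_adj_isLeaf ht hs
  obtain ⟨ht'r, ht'l, ht'c, ht'p⟩ := cc.spine_of_adj_isLeaf ht' hs
  exact cc.eq_of_not_isLeaf htr ht'r htl ht'l (htc.trans ht'c.symm) (htp.trans ht'p.symm)

lemma not_isLeaf_of_adj (cc : CaterpillarCoords G r C) {S : Set V}
    (hS : (G.induce S).Connected) {s s' t t' : V}
    (hs : s ∈ S) (hs' : s' ∈ S) (ht : t ∉ S) (hst : G.Adj s t) (hst' : G.Adj s' t')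
    (htt' : t ≠ t') : ¬ cc.IsLeaf s := by
  intro hleaf
  by_cases hss' : s' = s
  · subst hss'
    exact htt' (cc.eq_of_adj_isLeaf hst.symm hst'.symm hleaf)
  · obtain ⟨d, hd⟩ := hS.exists_adj_of_ne (a := ⟨s, hs⟩) (b := ⟨s', hs'⟩)
      (fun h => hss' (Subtype.mk.inj h).symm)
    have hdt : d.1 = t := cc.eq_of_adj_isLeaf (SimpleGraph.induce_adj.mp hd).symm hst.symm hleaf
    exact ht (hdt ▸ d.2)

lemma exists_spine_mem (cc : CaterpillarCoords G r C) {S : Set V}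
    (hS : (G.induce S).Connected) {s t : V} (hs : s ∈ S) (ht : t ∈ S) (htl : ¬ cc.IsLeaf t) :
    ∃ s' ∈ S, ¬ cc.IsLeaf s' ∧ cc.comp s' = cc.comp s ∧ cc.pos s' = cc.pos s := by
  by_cases hsl : cc.IsLeaf s
  · obtain ⟨d, hd⟩ := hS.exists_adj_of_ne (a := ⟨s, hs⟩) (b := ⟨t, ht⟩)
      (fun h => htl (Subtype.mk.inj h ▸ hsl))
    obtain ⟨-, hdl, hdc, hdp⟩ := cc.spine_of_adj_isLeaf (SimpleGraph.induce_adj.mp hd).symm hsl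
    exact ⟨d.1, d.2, hdl, hdc, hdp⟩
  · exact ⟨s, hs, hsl, rfl, rfl⟩

/-- A subdivided claw with centre `A`, middle vertices `B i` and ends `D i` is not a minor of
a disjoint union of caterpillars, even when the ends may use the extra vertex `r`. -/
theorem false_of_spider (cc : CaterpillarCoords G r C) {A : Set V} {B D : Fin 3 → Set V}
    (hA : (G.induce A).Connected) (hB : ∀ i, (G.induce (B i)).Connected)
    (hrA : r ∉ A) (hrB : ∀ i, r ∉ B i)
    (hAB : ∀ i, Disjoint A (B i)) (hBB : Pairwise fun i j => Disjoint (B i) (B j))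
    (hAD : ∀ i, Disjoint A (D i))
    (eAB : ∀ i, ∃ a ∈ A, ∃ b ∈ B i, G.Adj a b)
    (eBD : ∀ i, ∃ b ∈ B i, ∃ d ∈ D i, G.Adj b d) : False := by
  choose a ha b hb hab using eAB
  choose b' hb' d hd hbd using eBD
  have ne_r : ∀ {S : Set V} {v}, r ∉ S → v ∈ S → v ≠ r := fun hr hv h => hr (h ▸ hv)
  have har i : a i ≠ r := ne_r hrA (ha i)
  have hbr i : b i ≠ r := ne_r (hrB i) (hb i)
  have hal i : ¬ cc.IsLeaf (a i) := by
    obtain ⟨j, hij⟩ : ∃ j, i ≠ j := ⟨i + 1, by fin_cases i <;> decide⟩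
    exact cc.not_isLeaf_of_adj hA (ha i) (ha j) (Set.disjoint_right.mp (hAB i) (hb i)) (hab i)
      (hab j) (fun h => Set.disjoint_left.mp (hBB hij) (hb i) (h ▸ hb j))
  have hbl i : ¬ cc.IsLeaf (b i) :=
    cc.not_isLeaf_of_adj (hB i) (hb i) (hb' i) (Set.disjoint_left.mp (hAB i) (ha i))
      (hab i).symm (hbd i) (fun h => Set.disjoint_left.mp (hAD i) (ha i) (h ▸ hd i))
  have hcompA : ∀ v ∈ A, cc.comp v = cc.comp (a 0) := fun v hv =>
    hA.apply_eq_of_adj (fun v : A => cc.comp v)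
      (fun x y hxy => cc.comp_eq_of_adj hxy (ne_r hrA x.2) (ne_r hrA y.2)) ⟨v, hv⟩ ⟨a 0, ha 0⟩
  have hcompB i : cc.comp (b i) = cc.comp (a 0) :=
    (cc.comp_eq_of_adj (hab i) (har i) (hbr i)).symm.trans (hcompA _ (ha i))
  set I := Set.range (fun v : A => cc.pos v)
  have hI : I.OrdConnected := hA.ordConnected_range _
    (fun x y hxy => cc.abs_pos_sub_le_one hxy (ne_r hrA x.2) (ne_r hrA y.2))
  have hbI i : cc.pos (b i) ∉ I := by
    rintro ⟨v, hv⟩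
    obtain ⟨s, hs, hsl, hsc, hsp⟩ := cc.exists_spine_mem hA v.2 (ha 0) (hal 0)
    have hsb : s = b i := cc.eq_of_not_isLeaf (ne_r hrA hs) (hbr i) hsl (hbl i)
      (by rw [hsc, hcompA _ v.2, hcompB]) (hsp.trans hv)
    exact Set.disjoint_left.mp (hAB i) hs (hsb ▸ hb i)
  have hstep i : cc.pos (b i) - cc.pos (a i) ∈ ({-1, 1} : Finset ℤ) := by
    have h1 := abs_le.mp (cc.abs_pos_sub_le_one (hab i).symm (hbr i) (har i))
    have h0 : cc.pos (a i) ≠ cc.pos (b i) := fun h => (hab i).ne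
      (cc.eq_of_not_isLeaf (har i) (hbr i) (hal i) (hbl i)
        ((hcompA _ (ha i)).trans (hcompB i).symm) h)
    simp only [Finset.mem_insert, Finset.mem_singleton]
    omega
  obtain ⟨i, -, j, -, hij, hdij⟩ := Finset.exists_ne_map_eq_of_card_lt_of_maps_to
    (s := Finset.univ) (by simp) (fun i _ => hstep i)
  have hpos : cc.pos (b i) = cc.pos (b j) := hI.eq_of_sub_eq_sub (hbI i) (hbI j)
    ⟨⟨a i, ha i⟩, rfl⟩ ⟨⟨a j, ha j⟩, rfl⟩ hdij
    (cc.abs_pos_sub_le_one (hab i).symm (hbr i) (har i))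
  have hbij := cc.eq_of_not_isLeaf (hbr i) (hbr j) (hbl i) (hbl j)
    ((hcompB i).trans (hcompB j).symm) hpos
  exact Set.disjoint_left.mp (hBB hij) (hb i) (hbij ▸ hb j)

theorem false_of_isMinorEmbedding (cc : CaterpillarCoords G r C) {P : SimpleGraph W}
    {f : V → W} (hf : IsMinorEmbedding G P f) {a : W} {b d : Fin 3 → W}
    (hb : Function.Injective b) (hab : ∀ i, P.Adj a (b i)) (hbd : ∀ i, P.Adj (b i) (d i))
    (had : ∀ i, a ≠ d i) (hra : f r ≠ a) (hrb : ∀ i, f r ≠ b i) : False := by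
  obtain ⟨-, hconn, hedge⟩ := hf
  have hdisj {x y : W} (hxy : x ≠ y) : Disjoint (f ⁻¹' {x}) (f ⁻¹' {y}) :=
    (Set.disjoint_singleton.mpr hxy).preimage f
  have hbranch {x y : W} (hxy : P.Adj x y) : ∃ v ∈ f ⁻¹' {x}, ∃ w ∈ f ⁻¹' {y}, G.Adj v w := by
    obtain ⟨v, w, hvw, rfl, rfl⟩ := hedge hxy
    exact ⟨v, rfl, w, rfl, hvw⟩
  exact cc.false_of_spider (hconn a) (fun i => hconn (b i)) hra (fun i => hrb i)
    (fun i => hdisj (hab i).ne) (fun i j hij => hdisj (hb.ne hij)) (fun i => hdisj (had i))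
    (fun i => hbranch (hab i)) (fun i => hbranch (hbd i))

end CaterpillarCoords

section BigT

variable {α : Type*} [PartialOrder α] {n : ℕ} {u : Fin n → α} {X : Finset (α × α)}

def bigTIsLeaf : BigTVert n u X → Prop
  | .inr ⟨_, .inr (.inl (.inr _))⟩ => True
  | .inr ⟨_, .inr (.inr (.inr _))⟩ => True
  | _ => False

def bigTComp : BigTVert n u X → Option {x // x ∈ X}
  | .inl _ => none
  | .inr ⟨x, _⟩ => some x

def bigTPos : BigTVert n u X → ℤ
  | .inr ⟨_, .inr (.inl (.inl i))⟩ => -((i : ℤ) + 1)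
  | .inr ⟨_, .inr (.inl (.inr j))⟩ => -((j.1 : ℤ) + 1)
  | .inr ⟨_, .inr (.inr (.inl i))⟩ => (i : ℤ) + 1
  | .inr ⟨_, .inr (.inr (.inr j))⟩ => (j.1 : ℤ) + 1
  | _ => 0

lemma bigTRel_spec {a b : BigTVert n u X} (h : BigTRel n u X a b) :
    ¬ bigTIsLeaf a ∧ (a = Sum.inl () ∧ ¬ bigTIsLeaf b ∨
      a ≠ Sum.inl () ∧ bigTComp a = bigTComp b ∧ |bigTPos a - bigTPos b| ≤ 1 ∧
        (bigTIsLeaf b → bigTPos a = bigTPos b)) := by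
  rcases a with ⟨⟩ | ⟨x, pa⟩ <;> rcases b with _ | ⟨y, pb⟩
  · exact h.elim
  · rcases pb with _ | _
    · exact ⟨id, Or.inl ⟨rfl, id⟩⟩
    · exact h.elim
  · exact h.elim
  · obtain ⟨hxy, hp⟩ := h
    dsimp only at hxy hp
    subst hxy
    rcases pa with ⟨⟩ | (i | j) | (i | j) <;> rcases pb with ⟨⟩ | (i' | j') | (i' | j') <;>
      simp_all [PairTreeRel, OCatRel, bigTIsLeaf, bigTComp, bigTPos]
    all_goals exact Sum.inr_ne_inl

lemma eq_of_not_bigTIsLeaf {a b : BigTVert n u X} (ha : a ≠ Sum.inl ()) (hb : b ≠ Sum.inl ())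
    (hal : ¬ bigTIsLeaf a) (hbl : ¬ bigTIsLeaf b) (hc : bigTComp a = bigTComp b)
    (hp : bigTPos a = bigTPos b) : a = b := by
  rcases a with ⟨⟩ | ⟨x, pa⟩
  · exact absurd rfl ha
  rcases b with ⟨⟩ | ⟨y, pb⟩
  · exact absurd rfl hb
  obtain rfl : x = y := Option.some_inj.mp hc
  rcases pa with ⟨⟩ | (i | j) | (i | j) <;> rcases pb with ⟨⟩ | (i' | j') | (i' | j') <;>
    simp_all [bigTIsLeaf, bigTPos]
  all_goals first | omega | rfl | (obtain rfl := Fin.ext hp; rfl)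

def bigTCaterpillarCoords :
    CaterpillarCoords (BigT n u X) (Sum.inl ()) (Option {x // x ∈ X}) where
  IsLeaf := bigTIsLeaf
  comp := bigTComp
  pos := bigTPos
  comp_eq_of_adj a b h ha hb := by
    rcases (SimpleGraph.fromRel_adj _ a b).mp h with ⟨-, h | h⟩
    · exact (((bigTRel_spec h).2.resolve_left fun h' => ha h'.1).2.1)
    · exact (((bigTRel_spec h).2.resolve_left fun h' => hb h'.1).2.1).symm
  abs_pos_sub_le_one a b h ha hb := by
    rcases (SimpleGraph.fromRel_adj _ a b).mp h with ⟨-, h | h⟩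
    · exact (((bigTRel_spec h).2.resolve_left fun h' => ha h'.1).2.2.1)
    · exact abs_sub_comm (bigTPos a) (bigTPos b) ▸
        (((bigTRel_spec h).2.resolve_left fun h' => hb h'.1).2.2.1)
  eq_of_not_isLeaf _ _ := eq_of_not_bigTIsLeaf
  spine_of_adj_isLeaf a b h hb := by
    rcases (SimpleGraph.fromRel_adj _ a b).mp h with ⟨-, h | h⟩
    · obtain ⟨hal, ⟨-, hbl⟩ | ⟨har, hc, -, hp⟩⟩ := bigTRel_spec h
      · exact (hbl hb).elim
      · exact ⟨har, hal, hc, hp hb⟩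
    · exact ((bigTRel_spec h).1 hb).elim

end BigT

section BigP

variable {α : Type*} [PartialOrder α] {n : ℕ} {u : Fin n → α} {Y : Finset (α × α)} {Z : Finset α}

lemma bigP_adj_of_rel {a b : BigPVert n u Y Z} (hab : a ≠ b) (h : BigPRel n u Y Z a b) :
    (BigP n u Y Z).Adj a b :=
  (SimpleGraph.fromRel_adj _ a b).mpr ⟨hab, Or.inl h⟩

/-- The root `r_y` of `Q_y` is the centre of a subdivided claw in `P` whose legs run along the
two caterpillars of `Q_y` and through `r_P` to any other neighbour `c` of `r_P`. -/
theorem CaterpillarCoords.false_of_isMinorEmbedding_bigP {V C : Type*} {G : SimpleGraph V}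
    {r : V} (cc : CaterpillarCoords G r C) {f : V → BigPVert n u Y Z}
    (hf : IsMinorEmbedding G (BigP n u Y Z) f) (y : {y // y ∈ Y}) (c : BigPVert n u Y Z)
    (hc : (BigP n u Y Z).Adj (Sum.inl ()) c) (hcy : c ≠ Sum.inr (Sum.inl ⟨y, Sum.inl ()⟩))
    (hr : f r ≠ Sum.inl ()) (hry : ∀ v, f r ≠ Sum.inr (Sum.inl ⟨y, v⟩)) : False := by
  refine cc.false_of_isMinorEmbedding hf (a := Sum.inr (Sum.inl ⟨y, Sum.inl ()⟩))
    (b := ![Sum.inr (Sum.inl ⟨y, Sum.inr (Sum.inl (Sum.inl 0))⟩),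
      Sum.inr (Sum.inl ⟨y, Sum.inr (Sum.inr (Sum.inl 0))⟩), Sum.inl ()])
    (d := ![Sum.inr (Sum.inl ⟨y, Sum.inr (Sum.inl (Sum.inl 1))⟩),
      Sum.inr (Sum.inl ⟨y, Sum.inr (Sum.inr (Sum.inl 1))⟩), c])
    ?_ ?_ ?_ ?_ (hry _) ?_
  · intro i j hij
    fin_cases i <;> fin_cases j <;> first | rfl | cases hij
  · intro i
    fin_cases i
    · exact bigP_adj_of_rel (by rintro ⟨⟩) ⟨rfl, rfl⟩
    · exact bigP_adj_of_rel (by rintro ⟨⟩) ⟨rfl, rfl⟩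
    · exact (bigP_adj_of_rel (a := Sum.inl ()) (b := Sum.inr (Sum.inl ⟨y, Sum.inl ()⟩))
        (by rintro ⟨⟩) trivial).symm
  · intro i
    fin_cases i
    · exact bigP_adj_of_rel (by rintro ⟨⟩) ⟨rfl, rfl⟩
    · exact bigP_adj_of_rel (by rintro ⟨⟩) ⟨rfl, rfl⟩
    · exact hc
  · intro i
    fin_cases i
    · rintro ⟨⟩
    · rintro ⟨⟩
    · exact hcy.symm
  · intro i
    fin_cases i
    · exact hry _
    · exact hry _
    · exact hr

end BigP

theorem stmt_12_general {α : Type*} [PartialOrder α] (n : ℕ) (u : Fin n → α)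
    (X Y : Finset (α × α)) (Z : Finset α)
    (hZ : Z.Nonempty)
    (hY2 : 2 ≤ Y.card)
    (φ : BigTVert n u X → BigPVert n u Y Z)
    (hφ : IsMinorEmbedding (BigT n u X) (BigP n u Y Z) φ) :
    φ (Sum.inl ()) = Sum.inl () := by
  by_contra hr
  have key := bigTCaterpillarCoords.false_of_isMinorEmbedding_bigP hφ (hr := hr)
  generalize φ (Sum.inl ()) = w at key hr
  match w, key, hr with
  | .inl (), _, hr => exact hr rfl
  | .inr (.inl ⟨y₀, _⟩), key, _ =>
    obtain ⟨y, hyY, hy⟩ := Finset.exists_mem_ne hY2 y₀.1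
    obtain ⟨z, hz⟩ := hZ
    refine key ⟨y, hyY⟩ (Sum.inr (Sum.inr ⟨⟨z, hz⟩, Sum.inl 0⟩))
      (bigP_adj_of_rel (by rintro ⟨⟩) rfl) (by rintro ⟨⟩) fun v h => ?_
    cases h
    exact hy rfl
  | .inr (.inr _), key, _ =>
    obtain ⟨y, hyY, y', hy'Y, hyy'⟩ := Finset.one_lt_card.mp hY2
    refine key ⟨y, hyY⟩ (Sum.inr (Sum.inl ⟨⟨y', hy'Y⟩, Sum.inl ()⟩))
      (bigP_adj_of_rel (by rintro ⟨⟩) trivial) ?_ (by rintro v ⟨⟩)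
    rintro ⟨⟩
    exact hyy' rfl

/-- With `X, Y, Z` nonempty, `|X| ≥ 2` and `|Y| ≥ 2`, every minor embedding `φ` of `P` in
`T` satisfies `φ(r_T) = r_P`. -/
theorem stmt_12 {α : Type*} [PartialOrder α] [Fintype α] (n : ℕ) (u : Fin n → α)
    (hu : Function.Surjective u)
    (X Y : Finset (α × α)) (Z : Finset α)
    (hX : X.Nonempty) (hY : Y.Nonempty) (hZ : Z.Nonempty)
    (hX2 : 2 ≤ X.card) (hY2 : 2 ≤ Y.card)
    (φ : BigTVert n u X → BigPVert n u Y Z)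
    (hφ : IsMinorEmbedding (BigT n u X) (BigP n u Y Z) φ) :
    φ (Sum.inl ()) = Sum.inl () :=
  stmt_12_general n u X Y Z hZ hY2 φ hφ
end

section
/- Let x_1 ≤ x_2 ≤ … ≤ x_p and x'_1 ≤ x'_2 ≤ … ≤ x'_q be non-decreasing sequences of nonnegative integers and let a, a' be nonnegative integers. Define greedy indices by h_0 = 0 and, for i = 1,…,p, h_i = the least index h with h > h_{i−1} and x_i ≤ x'_h (if it exists). Then the following are equivalent: (1) the indices h_1,…,h_p all exist and a ≤ a' + Σ_{j ∈ {1,…,q} \ {h_1,…,h_p}} x'_j; (2) there exists an injection g : {1,…,p} → {1,…,q} such that x_i ≤ x'_{g(i)} for all i and a ≤ a' + Σ_{j ∈ {1,…,q} \ g({1,…,p})} x'_j. -/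
private lemma aux_sm_expand {p q : ℕ} {f : Fin p → Fin q} (hf : StrictMono f) :
    ∀ (d : ℕ) (i' i : Fin p), i'.val + d = i.val → (f i').val + d ≤ (f i).val := by
  intro d
  induction d with
  | zero =>
      intro i' i hd
      have : i' = i := Fin.ext (by omega)
      subst this; simp
  | succ d ih =>
      intro i' i hd
      have hmidlt : i'.val + d < p := by omega
      set imid : Fin p := ⟨i'.val + d, hmidlt⟩ with himid
      have h1 : (f i').val + d ≤ (f imid).val := ih i' imid rfl
      have h2 : f imid < f i := hf (by simp [himid, Fin.lt_def]; omega)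
      have := Fin.lt_def.mp h2
      omega

/-- Any dominating injection can be sorted into a strictly monotone one with the same image. -/
private lemma aux_sort {p q : ℕ} (x : Fin p → ℕ) (x' : Fin q → ℕ)
    (hx : Monotone x) (hx' : Monotone x') (g : Fin p → Fin q) (ginj : Function.Injective g)
    (gdom : ∀ i, x i ≤ x' (g i)) :
    ∃ g' : Fin p → Fin q, StrictMono g' ∧ (∀ i, x i ≤ x' (g' i)) ∧
      Finset.image g' Finset.univ = Finset.image g Finset.univ := by
  classical
  set s : Finset (Fin q) := Finset.image g Finset.univ with hs
  have hc : s.card = p := by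
    rw [hs, Finset.card_image_of_injective _ ginj, Finset.card_univ, Fintype.card_fin]
  set g' : Fin p → Fin q := fun i => ((s.orderIsoOfFin hc) i : Fin q) with hg'
  have hsm : StrictMono g' := fun a b hab => by
    exact (s.orderIsoOfFin hc).strictMono hab
  have himg : Finset.image g' Finset.univ = s := by
    ext j
    simp only [Finset.mem_image, Finset.mem_univ, true_and]
    constructor
    · rintro ⟨i, rfl⟩; exact ((s.orderIsoOfFin hc) i).2
    · intro hj
      obtain ⟨i, hi⟩ := (s.orderIsoOfFin hc).surjective ⟨j, hj⟩
      exact ⟨i, congrArg Subtype.val hi⟩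
  refine ⟨g', hsm, ?_, himg⟩
  intro i
  -- find i' ≥ i with g i' ≤ g' i
  set B : Finset (Fin p) := Finset.univ.filter (fun i' => g i' ≤ g' i) with hB
  have himgB : Finset.image g B = s.filter (· ≤ g' i) := by
    ext j
    simp only [Finset.mem_image, hB, Finset.mem_filter, Finset.mem_univ, true_and, hs]
    constructor
    · rintro ⟨i', hle, rfl⟩
      exact ⟨⟨i', rfl⟩, hle⟩
    · rintro ⟨hjs, hle⟩
      obtain ⟨i', rfl⟩ := hjs
      exact ⟨i', hle, rfl⟩
  have hfilt : s.filter (· ≤ g' i) = (Finset.Iic i).image g' := by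
    ext j
    simp only [Finset.mem_filter, Finset.mem_image, Finset.mem_Iic]
    constructor
    · rintro ⟨hjs, hle⟩
      obtain ⟨k, hk⟩ := (s.orderIsoOfFin hc).surjective ⟨j, hjs⟩
      have hkj : g' k = j := congrArg Subtype.val hk
      refine ⟨k, ?_, hkj⟩
      have : g' k ≤ g' i := by rw [hkj]; exact hle
      exact hsm.le_iff_le.mp this
    · rintro ⟨k, hki, rfl⟩
      refine ⟨((s.orderIsoOfFin hc) k).2, hsm.monotone hki⟩
  have hcardfilt : (s.filter (· ≤ g' i)).card = i.val + 1 := by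
    rw [hfilt, Finset.card_image_of_injective _ hsm.injective, Fin.card_Iic]
  have hcardB : B.card = i.val + 1 := by
    have := Finset.card_image_of_injective B ginj
    rw [himgB, hcardfilt] at this
    omega
  have hex : ∃ i' ∈ B, i ≤ i' := by
    by_contra hcon
    push_neg at hcon
    have hsub : B ⊆ Finset.Iio i := fun i' hi' => Finset.mem_Iio.mpr (hcon i' hi')
    have := Finset.card_le_card hsub
    rw [hcardB, Fin.card_Iio] at this
    omega
  obtain ⟨i', hi'B, hii'⟩ := hex
  have hle : g i' ≤ g' i := (Finset.mem_filter.mp hi'B).2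
  calc x i ≤ x i' := hx hii'
    _ ≤ x' (g i') := gdom i'
    _ ≤ x' (g' i) := hx' hle

/-- Greedy matching lemma. Let `x : Fin p → ℕ` and `x' : Fin q → ℕ` be non-decreasing
sequences and `a a' : ℕ`. The following are equivalent:
(1) the greedy indices all exist, i.e. there is a strictly increasing `h : Fin p → Fin q`
with `x i ≤ x' (h i)` for all `i` which is greedy-minimal (any smaller candidate index, still
above all previously chosen ones, fails the inequality), and
`a ≤ a' + Σ_{j ∉ range h} x' j`;
(2) there is an injection `g : Fin p → Fin q` with `x i ≤ x' (g i)` for all `i` and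
`a ≤ a' + Σ_{j ∉ range g} x' j`. -/
theorem stmt_14 {p q : ℕ} (x : Fin p → ℕ) (x' : Fin q → ℕ)
    (hx : Monotone x) (hx' : Monotone x') (a a' : ℕ) :
    (∃ h : Fin p → Fin q, StrictMono h ∧ (∀ i, x i ≤ x' (h i)) ∧
      (∀ (i : Fin p) (j : Fin q), j < h i → (∀ i' : Fin p, i' < i → h i' < j) →
        x' j < x i) ∧
      a ≤ a' + ∑ j ∈ Finset.univ.filter (fun j : Fin q => ∀ i, h i ≠ j), x' j) ↔
    (∃ g : Fin p → Fin q, Function.Injective g ∧ (∀ i, x i ≤ x' (g i)) ∧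
      a ≤ a' + ∑ j ∈ Finset.univ.filter (fun j : Fin q => ∀ i, g i ≠ j), x' j) := by
  classical
  constructor
  · rintro ⟨h, hsm, hdom, -, hsum⟩
    exact ⟨h, hsm.injective, hdom, hsum⟩
  · rintro ⟨g, ginj, gdom, gsum⟩
    obtain ⟨g', hg'sm, hg'dom, hg'img⟩ := aux_sort x x' hx hx' g ginj gdom
    -- the minimum admissible index for each i
    have hx'mono := hx'
    have hne : ∀ i : Fin p, (Finset.univ.filter (fun j : Fin q => x i ≤ x' j)).Nonempty :=
      fun i => ⟨g' i, by simp [hg'dom i]⟩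
    set m : Fin p → Fin q := fun i => (Finset.univ.filter (fun j : Fin q => x i ≤ x' j)).min' (hne i)
      with hm
    have hm_dom : ∀ i, x i ≤ x' (m i) := fun i => by
      have := Finset.min'_mem _ (hne i)
      exact (Finset.mem_filter.mp this).2
    have hm_min : ∀ (i : Fin p) (j : Fin q), j < m i → x' j < x i := by
      intro i j hj
      by_contra hcon
      push_neg at hcon
      have : m i ≤ j := Finset.min'_le _ _ (by simp [hcon])
      exact absurd hj (not_lt.mpr this)
    have hm_le : ∀ i, m i ≤ g' i := fun i => Finset.min'_le _ _ (by simp [hg'dom i])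
    -- hval
    have hIic : ∀ i : Fin p, (Finset.Iic i).Nonempty := fun i => ⟨i, Finset.mem_Iic.mpr le_rfl⟩
    set hval : Fin p → ℕ := fun i =>
      (Finset.Iic i).sup' (hIic i) (fun i' => (m i').val + (i.val - i'.val)) with hhval
    have hval_le : ∀ i : Fin p, hval i ≤ (g' i).val := by
      intro i
      apply Finset.sup'_le
      intro i' hi'
      have hle : i' ≤ i := Finset.mem_Iic.mp hi'
      have h1 : (m i').val ≤ (g' i').val := hm_le i'
      have h2 : (g' i').val + (i.val - i'.val) ≤ (g' i).val :=
        aux_sm_expand hg'sm (i.val - i'.val) i' i (by have := Fin.le_def.mp hle; omega)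
      omega
    have hval_lt : ∀ i : Fin p, hval i < q := fun i => lt_of_le_of_lt (hval_le i) (g' i).isLt
    set h : Fin p → Fin q := fun i => ⟨hval i, hval_lt i⟩ with hh
    have hle_g' : ∀ i, h i ≤ g' i := fun i => Fin.le_def.mpr (hval_le i)
    have hm_le_hval : ∀ i : Fin p, (m i).val ≤ hval i := by
      intro i
      have h0 := Finset.le_sup' (fun i' : Fin p => (m i').val + (i.val - i'.val))
        (Finset.mem_Iic.mpr (le_refl i))
      have h1 : (m i).val + (i.val - i.val) = (m i).val := by omega
      calc (m i).val = (fun i' : Fin p => (m i').val + (i.val - i'.val)) i := by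
            simp only; omega
        _ ≤ _ := h0
    have hsm : StrictMono h := by
      intro i₁ i₂ h12
      have h12' : i₁.val < i₂.val := Fin.lt_def.mp h12
      rw [hh, Fin.lt_def]
      simp only
      rw [hhval]
      rw [Finset.sup'_lt_iff]
      intro i' hi'
      have hle : i'.val ≤ i₁.val := Fin.le_def.mp (Finset.mem_Iic.mp hi')
      have hmem : i' ∈ Finset.Iic i₂ := Finset.mem_Iic.mpr (Fin.le_def.mpr (by omega))
      have hs2 := Finset.le_sup' (fun k : Fin p => (m k).val + (i₂.val - k.val)) hmem
      have hs2' : (m i').val + (i₂.val - i'.val) ≤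
          (Finset.Iic i₂).sup' (hIic i₂) (fun k : Fin p => (m k).val + (i₂.val - k.val)) := hs2
      show (m i').val + (i₁.val - i'.val) <
          (Finset.Iic i₂).sup' (hIic i₂) (fun k : Fin p => (m k).val + (i₂.val - k.val))
      omega
    have hdom : ∀ i, x i ≤ x' (h i) := by
      intro i
      calc x i ≤ x' (m i) := hm_dom i
        _ ≤ x' (h i) := hx' (Fin.le_def.mpr (hm_le_hval i))
    have hmin : ∀ (i : Fin p) (j : Fin q), j < h i → (∀ i' : Fin p, i' < i → h i' < j) →
        x' j < x i := by
      intro i j hj hprev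
      apply hm_min i j
      rw [Fin.lt_def]
      by_contra hcon
      push_neg at hcon  -- (m i).val ≤ j.val
      have hjlt : j.val < hval i := Fin.lt_def.mp hj
      rw [hhval] at hjlt
      rw [Finset.lt_sup'_iff] at hjlt
      obtain ⟨istar, histarmem, histar⟩ := hjlt
      have histar' : j.val < (m istar).val + (i.val - istar.val) := histar
      have histari : istar.val ≤ i.val := Fin.le_def.mp (Finset.mem_Iic.mp histarmem)
      rcases eq_or_lt_of_le histari with heq | hltq
      · have heq2 : istar = i := Fin.ext heq
        subst heq2
        omega
      · have hip : i.val - 1 < p := by omega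
        set iprev : Fin p := ⟨i.val - 1, hip⟩ with hiprev
        have hpl : h iprev < j := hprev iprev (Fin.lt_def.mpr (by simp [hiprev]; omega))
        have hlt2 : hval iprev < j.val := Fin.lt_def.mp hpl
        have hmem2 : istar ∈ Finset.Iic iprev :=
          Finset.mem_Iic.mpr (Fin.le_def.mpr (by simp [hiprev]; omega))
        have h3 : (m istar).val + (iprev.val - istar.val) ≤ hval iprev :=
          Finset.le_sup' (fun k : Fin p => (m k).val + (iprev.val - k.val)) hmem2
        have h4 : iprev.val = i.val - 1 := rfl
        omega
    refine ⟨h, hsm, hdom, hmin, ?_⟩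
    have key : ∀ (f : Fin p → Fin q), Function.Injective f →
        (∑ j ∈ Finset.univ.filter (fun j => ∀ i, f i ≠ j), x' j) + (∑ i, x' (f i)) =
          ∑ j : Fin q, x' j := by
      intro f hf
      have h1 : Finset.univ.filter (fun j : Fin q => ∀ i, f i ≠ j) =
          Finset.univ \ Finset.image f Finset.univ := by
        ext j
        simp only [Finset.mem_filter, Finset.mem_univ, true_and, Finset.mem_sdiff,
          Finset.mem_image, not_exists]
      have h2 : (∑ i, x' (f i)) = ∑ j ∈ Finset.image f Finset.univ, x' j :=
        (Finset.sum_image (fun a _ b _ hab => hf hab)).symm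
      rw [h1, h2, Finset.sum_sdiff (Finset.subset_univ _)]
    have keyh := key h hsm.injective
    have keyg := key g ginj
    have hS : (∑ i, x' (h i)) ≤ ∑ i, x' (g i) := by
      calc ∑ i, x' (h i) ≤ ∑ i, x' (g' i) :=
            Finset.sum_le_sum (fun i _ => hx' (hle_g' i))
        _ = ∑ j ∈ Finset.image g' Finset.univ, x' j :=
            (Finset.sum_image (fun a _ b _ hab => hg'sm.injective hab)).symm
        _ = ∑ j ∈ Finset.image g Finset.univ, x' j := by rw [hg'img]
        _ = ∑ i, x' (g i) := Finset.sum_image (fun a _ b _ hab => ginj hab)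
    omega
end
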